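/- arXiv:2603.08698 — 9 statements merged into one kernel-verified Lean document; each statement's English description precedes it below -/
import Mathlib

section
/- Let R = k[x_1,...,x_n] be a polynomial ring over a field k with maximal ideal m = (x_1,...,x_n), and let q = p^e be a power of a prime. For any positive integer t, the colon ideal (m^[q] : m^t) equals R if t ≥ nq - n + 1, and equals m^[q] + m^{nq-n+1-t} if t < nq - n + 1, where m^[q] = (x_1^q,...,x_n^q). -/
/-!
Both ideals are monomial ideals, so membership can be read off the support. By pigeonhole, a
monomial of degree at least `n(q-1)+1` has some exponent `≥ q`, so `m^(n(q-1)+1) ⊆ m^[q]`, which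
gives `m^[q] + m^(n(q-1)+1-t) ⊆ (m^[q] : m^t)`. Conversely, if `x^d` occurs in `f` but lies
outside `m^[q] + m^(n(q-1)+1-t)`, then every `d i ≤ q-1` and `deg d + t ≤ n(q-1)`, so there is a
monomial `x^b` of degree `t` with `d + b ≤ (q-1,…,q-1)`; the monomial `x^(d+b)` then occurs in
`f x^b` but not in `m^[q]`, so `f ∉ (m^[q] : m^t)`.
-/

open MvPolynomial Finsupp

namespace MvPolynomial

variable {σ R : Type*} [CommSemiring R]

theorem span_X_pow_eq_span_monomial (q : ℕ) :
    Ideal.span (Set.range fun i => (X i : MvPolynomial σ R) ^ q) =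
      Ideal.span ((monomial · (1 : R)) '' Set.range fun i => single i q) := by
  simp only [← Set.range_comp, Function.comp_def, X_pow_eq_monomial]

theorem mem_span_X_pow_iff (q : ℕ) (f : MvPolynomial σ R) :
    f ∈ Ideal.span (Set.range fun i => (X i : MvPolynomial σ R) ^ q) ↔
      ∀ d ∈ f.support, ∃ i, q ≤ d i := by
  simp [span_X_pow_eq_span_monomial, mem_ideal_span_monomial_image]

theorem mem_span_X_pow_sup_pow_idealOfVars_iff (q s : ℕ) (f : MvPolynomial σ R) :
    f ∈ Ideal.span (Set.range fun i => (X i : MvPolynomial σ R) ^ q) ⊔ idealOfVars σ R ^ s ↔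
      ∀ d ∈ f.support, (∃ i, q ≤ d i) ∨ s ≤ degree d := by
  rw [span_X_pow_eq_span_monomial, pow_idealOfVars_eq_span, ← Ideal.span_union,
    ← Set.image_union, mem_ideal_span_monomial_image]
  refine forall₂_congr fun d _ => ?_
  simp only [Set.mem_union, Set.mem_range, Set.mem_preimage, Set.mem_singleton_iff]
  constructor
  · rintro ⟨c, ⟨i, rfl⟩ | rfl, hc⟩
    · exact .inl ⟨i, single_le_iff.mp hc⟩
    · exact .inr (degree_mono hc)
  · rintro (⟨i, hi⟩ | hs)
    · exact ⟨_, .inl ⟨i, rfl⟩, single_le_iff.mpr hi⟩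
    · obtain ⟨c, hc, rfl⟩ := exists_le_degree_eq d s hs
      exact ⟨c, .inr rfl, hc⟩

section Fintype

variable [Fintype σ]

theorem _root_.Finsupp.degree_le_card_mul_of_forall_lt {q : ℕ} {d : σ →₀ ℕ} (hd : ∀ i, d i < q) :
    degree d ≤ Fintype.card σ * (q - 1) := by
  rw [degree_eq_sum]
  simpa using Finset.sum_le_card_nsmul Finset.univ d (q - 1) fun i _ => Nat.le_sub_one_of_lt (hd i)

theorem _root_.Finsupp.exists_degree_eq_forall_add_lt {q t : ℕ} {d : σ →₀ ℕ} (hd : ∀ i, d i < q)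
    (ht : degree d + t ≤ Fintype.card σ * (q - 1)) :
    ∃ b : σ →₀ ℕ, degree b = t ∧ ∀ i, d i + b i < q := by
  set gaps : σ →₀ ℕ := equivFunOnFinite.symm fun i => q - 1 - d i
  have hgaps : degree gaps + degree d = Fintype.card σ * (q - 1) := by
    simp only [degree_eq_sum, gaps, coe_equivFunOnFinite_symm, ← Finset.sum_add_distrib]
    rw [Finset.sum_congr rfl fun i _ => Nat.sub_add_cancel (Nat.le_sub_one_of_lt (hd i))]
    simp
  obtain ⟨b, hb, rfl⟩ := exists_le_degree_eq gaps t (by omega)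
  refine ⟨b, rfl, fun i => ?_⟩
  have hbi : b i ≤ q - 1 - d i := hb i
  have := hd i
  omega

theorem pow_idealOfVars_le_span_X_pow (q : ℕ) :
    idealOfVars σ R ^ (Fintype.card σ * (q - 1) + 1) ≤
      Ideal.span (Set.range fun i => (X i : MvPolynomial σ R) ^ q) := by
  intro f hf
  rw [mem_pow_idealOfVars_iff] at hf
  rw [mem_span_X_pow_iff]
  intro d hd
  by_contra! h
  have := degree_le_card_mul_of_forall_lt h
  have := hf d hd
  omega

theorem span_X_pow_sup_pow_idealOfVars_le_colon (q t : ℕ) :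
    Ideal.span (Set.range fun i => (X i : MvPolynomial σ R) ^ q) ⊔
        idealOfVars σ R ^ (Fintype.card σ * (q - 1) + 1 - t) ≤
      (Ideal.span (Set.range fun i => (X i : MvPolynomial σ R) ^ q)).colon
        (idealOfVars σ R ^ t : Ideal (MvPolynomial σ R)) := by
  refine sup_le Ideal.le_colon fun f hf => Submodule.mem_colon.mpr fun g hg => ?_
  have hfg : f * g ∈ idealOfVars σ R ^ (Fintype.card σ * (q - 1) + 1 - t + t) :=
    pow_add (idealOfVars σ R) _ t ▸ Ideal.mul_mem_mul hf hg
  exact pow_idealOfVars_le_span_X_pow q (Ideal.pow_le_pow_right le_tsub_add hfg)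

theorem colon_le_span_X_pow_sup_pow_idealOfVars (q t : ℕ) :
    (Ideal.span (Set.range fun i => (X i : MvPolynomial σ R) ^ q)).colon
        (idealOfVars σ R ^ t : Ideal (MvPolynomial σ R)) ≤
      Ideal.span (Set.range fun i => (X i : MvPolynomial σ R) ^ q) ⊔
        idealOfVars σ R ^ (Fintype.card σ * (q - 1) + 1 - t) := by
  intro f hf
  rw [mem_span_X_pow_sup_pow_idealOfVars_iff]
  intro d hd
  by_contra! h
  obtain ⟨b, hbt, hb⟩ := exists_degree_eq_forall_add_lt (t := t) h.1 (by omega)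
  have hfb : f * monomial b 1 ∈ Ideal.span (Set.range fun i => (X i : MvPolynomial σ R) ^ q) :=
    Submodule.mem_colon.mp hf _ (by
      rw [pow_idealOfVars_eq_span]; exact Ideal.subset_span ⟨b, hbt, rfl⟩)
  have hdb : d + b ∈ (f * monomial b 1).support := by
    rwa [mem_support_iff, coeff_mul_monomial, mul_one, ← mem_support_iff]
  obtain ⟨i, hi⟩ := (mem_span_X_pow_iff q _).mp hfb _ hdb
  exact (hb i).not_ge hi

theorem span_X_pow_colon_pow_idealOfVars (q t : ℕ) :
    (Ideal.span (Set.range fun i => (X i : MvPolynomial σ R) ^ q)).colon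
        (idealOfVars σ R ^ t : Ideal (MvPolynomial σ R)) =
      Ideal.span (Set.range fun i => (X i : MvPolynomial σ R) ^ q) ⊔
        idealOfVars σ R ^ (Fintype.card σ * (q - 1) + 1 - t) :=
  (colon_le_span_X_pow_sup_pow_idealOfVars q t).antisymm
    (span_X_pow_sup_pow_idealOfVars_le_colon q t)

end Fintype

end MvPolynomial

theorem stmt0_general (k : Type*) [Field k] (n : ℕ) (q : ℕ) (t : ℕ) :
    (Ideal.span (Set.range fun i : Fin n => (X i : MvPolynomial (Fin n) k) ^ q)).colon
        (((Ideal.span (Set.range (X : Fin n → MvPolynomial (Fin n) k))) ^ t : Ideal (MvPolynomial (Fin n) k)) :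
          Set (MvPolynomial (Fin n) k)) =
      if n * q - n + 1 ≤ t then ⊤
      else
        Ideal.span (Set.range fun i : Fin n => (X i : MvPolynomial (Fin n) k) ^ q) ⊔
          (Ideal.span (Set.range (X : Fin n → MvPolynomial (Fin n) k))) ^ (n * q - n + 1 - t) := by
  have h := span_X_pow_colon_pow_idealOfVars (σ := Fin n) (R := k) q t
  rw [Fintype.card_fin, Nat.mul_sub_one] at h
  split_ifs with hN
  · rw [h, Nat.sub_eq_zero_of_le hN, pow_zero, Ideal.one_eq_top, sup_top_eq]
  · exact h

/-- For `R = k[x_1,…,x_n]` with `m = (x_1,…,x_n)` and `q = p^e`,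
the colon ideal `(m^[q] : m^t)` is `R` if `t ≥ nq - n + 1` and
`m^[q] + m^(nq-n+1-t)` otherwise. -/
theorem stmt0 (k : Type*) [Field k] (p : ℕ) (hp : p.Prime) [CharP k p]
    (n e : ℕ) (q : ℕ) (hq : q = p ^ e) (t : ℕ) (ht : 0 < t) :
    (Ideal.span (Set.range fun i : Fin n => (X i : MvPolynomial (Fin n) k) ^ q)).colon
        (((Ideal.span (Set.range (X : Fin n → MvPolynomial (Fin n) k))) ^ t : Ideal (MvPolynomial (Fin n) k)) :
          Set (MvPolynomial (Fin n) k)) =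
      if n * q - n + 1 ≤ t then ⊤
      else
        Ideal.span (Set.range fun i : Fin n => (X i : MvPolynomial (Fin n) k) ^ q) ⊔
          (Ideal.span (Set.range (X : Fin n → MvPolynomial (Fin n) k))) ^ (n * q - n + 1 - t) :=
  stmt0_general k n q t
end

section
/- Let R = k[x_1,...,x_n] be a polynomial ring over a field, let v be a monomial valuation on R with v(x_i) ≥ 0 for all i, and for real λ let a_λ = {f : v(f) ≥ λ} and a_λ^+ = {f : v(f) > λ}. Then for every positive integer q and real λ > 0, the colon ideal ((x_1^q,...,x_n^q) : a_λ) equals (x_1^q,...,x_n^q) + a^+_{(q-1)v(x_1⋯x_n) - λ}. -/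
/-!
A monomial `x^a` lies outside `(x_1^q, …, x_n^q)` exactly when every `a i < q`, and everything
reduces to monomials because both sides are monomial conditions on the support. For such `a`,
the complementary monomial `x^b` with `a + b = (q-1, …, q-1)` has value
`(q-1) v(x_1⋯x_n) - v(x^a)`, so `x^b ∈ a_λ` unless `v(x^a) > (q-1) v(x_1⋯x_n) - λ`; since
`x^a x^b ∉ (x_1^q, …, x_n^q)`, this gives `⊆`. Conversely, a product of monomials from
`a^+_{(q-1) v(x_1⋯x_n) - λ}` and `a_λ` has value `> (q-1) v(x_1⋯x_n)`, which no monomial with all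
exponents `< q` reaches when `v ≥ 0`.
-/

open MvPolynomial

/-- The value of a monomial valuation (with values `v i` on the variables)
on a monomial with exponent vector `a`. -/
noncomputable def monVal {n : ℕ} (v : Fin n → ℝ) (a : Fin n →₀ ℕ) : ℝ :=
  ∑ i, (a i : ℝ) * v i

/-- The valuation ideal `a_λ = {f : v(f) ≥ λ}` of a monomial valuation, as a set. -/
def valIdeal (k : Type*) [Field k] {n : ℕ} (v : Fin n → ℝ) (l : ℝ) :
    Set (MvPolynomial (Fin n) k) :=
  {f | ∀ a ∈ f.support, l ≤ monVal v a}

/-- The valuation ideal `a_λ^+ = {f : v(f) > λ}` of a monomial valuation, as a set. -/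
def valIdealPlus (k : Type*) [Field k] {n : ℕ} (v : Fin n → ℝ) (l : ℝ) :
    Set (MvPolynomial (Fin n) k) :=
  {f | ∀ a ∈ f.support, l < monVal v a}

theorem MvPolynomial.mem_span_X_pow_iff_s1 {σ R : Type*} [CommSemiring R] {q : ℕ}
    (f : MvPolynomial σ R) :
    f ∈ Ideal.span (Set.range fun i : σ => (X i : MvPolynomial σ R) ^ q) ↔
      ∀ a ∈ f.support, ∃ i, q ≤ a i := by
  have hrange : (Set.range fun i : σ => (X i : MvPolynomial σ R) ^ q)
      = (fun s => monomial s (1 : R)) '' Set.range fun i => Finsupp.single i q := by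
    rw [← Set.range_comp]
    congr 1
    funext i
    exact X_pow_eq_monomial
  simp only [hrange, mem_ideal_span_monomial_image, Set.exists_range_iff, Finsupp.single_le_iff]

theorem MvPolynomial.support_sum_monomial_coeff_subset {σ R : Type*} [CommSemiring R]
    (f : MvPolynomial σ R) (s : Finset (σ →₀ ℕ)) :
    (∑ a ∈ s, monomial a (coeff a f)).support ⊆ s := by
  classical
  intro c hc
  obtain ⟨a, ha, hca⟩ := Finset.mem_biUnion.mp (support_sum hc)
  rwa [Finset.mem_singleton.mp (support_monomial_subset hca)]

theorem MvPolynomial.exists_eq_add_of_support_split {σ R : Type*} [CommSemiring R]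
    (f : MvPolynomial σ R) (p : (σ →₀ ℕ) → Prop) :
    ∃ g h : MvPolynomial σ R, (∀ a ∈ g.support, p a) ∧
      (∀ a ∈ h.support, a ∈ f.support ∧ ¬ p a) ∧ f = g + h := by
  classical
  refine ⟨∑ a ∈ f.support.filter p, monomial a (coeff a f),
    ∑ a ∈ f.support.filter (¬ p ·), monomial a (coeff a f), fun a ha => ?_, fun a ha => ?_, ?_⟩
  · exact (Finset.mem_filter.mp (support_sum_monomial_coeff_subset f _ ha)).2
  · exact Finset.mem_filter.mp (support_sum_monomial_coeff_subset f _ ha)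
  · rw [Finset.sum_filter_add_sum_filter_not, support_sum_monomial_coeff]

section MonomialValuation

variable {n : ℕ} (v : Fin n → ℝ)

theorem monVal_add (a b : Fin n →₀ ℕ) : monVal v (a + b) = monVal v a + monVal v b := by
  simp only [monVal, Finsupp.add_apply, Nat.cast_add, add_mul, Finset.sum_add_distrib]

theorem monVal_le_of_forall_lt {v} (hv : ∀ i, 0 ≤ v i) {q : ℕ} {a : Fin n →₀ ℕ}
    (ha : ∀ i, a i < q) : monVal v a ≤ ((q : ℝ) - 1) * ∑ i, v i := by
  rw [monVal, Finset.mul_sum]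
  refine Finset.sum_le_sum fun i _ => mul_le_mul_of_nonneg_right ?_ (hv i)
  have : ((a i + 1 : ℕ) : ℝ) ≤ q := Nat.cast_le.mpr (ha i)
  push_cast at this
  linarith

noncomputable def exponentComplement (q : ℕ) (a : Fin n →₀ ℕ) : Fin n →₀ ℕ :=
  Finsupp.equivFunOnFinite.symm fun i => q - 1 - a i

theorem add_exponentComplement_apply {q : ℕ} {a : Fin n →₀ ℕ} (ha : ∀ i, a i < q) (i : Fin n) :
    (a + exponentComplement q a) i = q - 1 := by
  have := ha i
  simp only [exponentComplement, Finsupp.add_apply, Finsupp.coe_equivFunOnFinite_symm]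
  omega

theorem monVal_add_monVal_exponentComplement {q : ℕ} {a : Fin n →₀ ℕ} (ha : ∀ i, a i < q) :
    monVal v a + monVal v (exponentComplement q a) = ((q : ℝ) - 1) * ∑ i, v i := by
  rw [← monVal_add, monVal, Finset.mul_sum]
  refine Finset.sum_congr rfl fun i _ => ?_
  rw [add_exponentComplement_apply ha, Nat.cast_sub (ha i).pos]
  simp

end MonomialValuation

section ColonIdeal

variable {k : Type*} [Field k] {n : ℕ} {v : Fin n → ℝ} {q : ℕ} {lam : ℝ}

local notation "𝔪" q => Ideal.span (Set.range fun i : Fin n => (X i : MvPolynomial (Fin n) k) ^ q)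

theorem lt_monVal_of_forall_mul_mem {f : MvPolynomial (Fin n) k}
    (hf : ∀ g ∈ valIdeal k v lam, f * g ∈ 𝔪 q) {a : Fin n →₀ ℕ} (ha : a ∈ f.support)
    (hlt : ∀ i, a i < q) : ((q : ℝ) - 1) * (∑ i, v i) - lam < monVal v a := by
  by_contra! hle
  have hg : monomial (exponentComplement q a) (1 : k) ∈ valIdeal k v lam := by
    intro c hc
    rw [Finset.mem_singleton.mp (support_monomial_subset hc)]
    linarith [monVal_add_monVal_exponentComplement v hlt]
  have hsupp : a + exponentComplement q a ∈ (f * monomial (exponentComplement q a) 1).support := by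
    rwa [mem_support_iff, coeff_mul_monomial, mul_one, ← mem_support_iff]
  obtain ⟨i, hi⟩ := (mem_span_X_pow_iff_s1 _).mp (hf _ hg) _ hsupp
  have := hlt i
  rw [add_exponentComplement_apply hlt] at hi
  omega

theorem mul_mem_span_X_pow_of_mem_valIdealPlus (hv : ∀ i, 0 ≤ v i)
    {w g : MvPolynomial (Fin n) k}
    (hw : w ∈ valIdealPlus k v (((q : ℝ) - 1) * (∑ i, v i) - lam)) (hg : g ∈ valIdeal k v lam) :
    w * g ∈ 𝔪 q := by
  classical
  refine (mem_span_X_pow_iff_s1 _).mpr fun c hc => ?_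
  obtain ⟨a, ha, b, hb, rfl⟩ := Finset.mem_add.mp (support_mul w g hc)
  by_contra! hlt
  have := monVal_le_of_forall_lt hv hlt
  linarith [hw a ha, hg b hb, monVal_add v a b]

end ColonIdeal

theorem stmt1_general (k : Type*) [Field k] (n : ℕ) (v : Fin n → ℝ) (hv : ∀ i, 0 ≤ v i)
    (q : ℕ) (lam : ℝ) :
    {f : MvPolynomial (Fin n) k |
        ∀ g ∈ valIdeal k v lam,
          f * g ∈ Ideal.span (Set.range fun i : Fin n => (X i : MvPolynomial (Fin n) k) ^ q)} =
      {h : MvPolynomial (Fin n) k |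
        ∃ u ∈ Ideal.span (Set.range fun i : Fin n => (X i : MvPolynomial (Fin n) k) ^ q),
          ∃ w ∈ valIdealPlus k v (((q : ℝ) - 1) * (∑ i, v i) - lam), h = u + w} := by
  ext f
  constructor
  · intro hf
    obtain ⟨u, w, hu, hw, rfl⟩ := exists_eq_add_of_support_split f fun a => ∃ i, q ≤ a i
    refine ⟨u, (mem_span_X_pow_iff_s1 u).mpr hu, w, fun a ha => ?_, rfl⟩
    obtain ⟨ha, hlt⟩ := hw a ha
    simp only [not_exists, not_le] at hlt
    exact lt_monVal_of_forall_mul_mem hf ha hlt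
  · rintro ⟨u, hu, w, hw, rfl⟩ g hg
    rw [add_mul]
    exact Ideal.add_mem _ (Ideal.mul_mem_right g _ hu)
      (mul_mem_span_X_pow_of_mem_valIdealPlus hv hw hg)

/-- for a monomial valuation `v ≥ 0` on `k[x_1,…,x_n]`, a positive
integer `q` and real `λ > 0`,
`((x_1^q,…,x_n^q) : a_λ) = (x_1^q,…,x_n^q) + a^+_{(q-1)·v(x_1⋯x_n) - λ}`. -/
theorem stmt1 (k : Type*) [Field k] (n : ℕ) (v : Fin n → ℝ) (hv : ∀ i, 0 ≤ v i)
    (q : ℕ) (hq : 0 < q) (lam : ℝ) (hlam : 0 < lam) :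
    {f : MvPolynomial (Fin n) k |
        ∀ g ∈ valIdeal k v lam,
          f * g ∈ Ideal.span (Set.range fun i : Fin n => (X i : MvPolynomial (Fin n) k) ^ q)} =
      {h : MvPolynomial (Fin n) k |
        ∃ u ∈ Ideal.span (Set.range fun i : Fin n => (X i : MvPolynomial (Fin n) k) ^ q),
          ∃ w ∈ valIdealPlus k v (((q : ℝ) - 1) * (∑ i, v i) - lam), h = u + w} :=
  stmt1_general k n v hv q lam
end

section
/- Let μ_0,...,μ_s : Z^n → Q be linear maps and U ⊆ Z^n a finite set. Then there exists a linear map μ : Z^n → Z such that for all u, v ∈ U, μ(u) < μ(v) holds if and only if there exists 0 ≤ k ≤ s with μ_k(u) < μ_k(v) and μ_ℓ(u) = μ_ℓ(v) for all 0 ≤ ℓ ≤ k-1. -/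
/-!
Each `μ_k` is a positive rational multiple of an integral functional `ν_k` (clear denominators
on a basis), and positive scaling does not change the lexicographic comparison. The `ν_k` are
then combined recursively as `C • ν_0 + μ'`, where `μ'` realizes the lexicographic order of
`ν_1, …, ν_s` on `U`: as `ν_0` is integer valued, `C • ν_0` dominates once `C` exceeds every
difference of values of `μ'` on the finite set `U`.
-/

open Finset

theorem exists_mul_add_lt_iff_lex {α : Type*} (U : Finset α) (g h : α → ℤ) :
    ∃ C : ℤ, ∀ u ∈ U, ∀ v ∈ U,
      C * g u + h u < C * g v + h v ↔ g u < g v ∨ g u = g v ∧ h u < h v := by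
  set B := ∑ w ∈ U, |h w|
  have hB : ∀ u ∈ U, |h u| ≤ B := fun u hu =>
    single_le_sum (f := fun w => |h w|) (fun w _ => abs_nonneg _) hu
  refine ⟨2 * B + 1, fun u hu v hv => ?_⟩
  have hu_bound := abs_le.mp (hB u hu)
  have hv_bound := abs_le.mp (hB v hv)
  rcases lt_trichotomy (g u) (g v) with hg | hg | hg
  · have hgap : 1 ≤ g v - g u := by omega
    simp only [hg, true_or, iff_true]
    nlinarith
  · simp [hg]
  · have hgap : 1 ≤ g u - g v := by omega
    simp only [hg.ne', hg.not_gt, false_or, false_and, iff_false, not_lt]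
    nlinarith

theorem exists_linearMap_lt_iff_lex {M : Type*} [AddCommGroup M] :
    ∀ {s : ℕ} (ν : Fin s → M →ₗ[ℤ] ℤ) (U : Finset M), ∃ μ : M →ₗ[ℤ] ℤ, ∀ u ∈ U, ∀ v ∈ U,
      μ u < μ v ↔ Pi.Lex (· < ·) (· < ·) (fun k => ν k u) (fun k => ν k v)
  | 0, _, _ => ⟨0, fun u _ v _ => by simp [Pi.Lex]⟩
  | s + 1, ν, U => by
    obtain ⟨μ, hμ⟩ := exists_linearMap_lt_iff_lex (Fin.tail ν) U
    obtain ⟨C, hC⟩ := exists_mul_add_lt_iff_lex U (ν 0) μ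
    refine ⟨C • ν 0 + μ, fun u hu v hv => ?_⟩
    have hcons : ∀ w, (fun k => ν k w) = Fin.cons (ν 0 w) (fun k => ν k.succ w) := fun w =>
      (Fin.cons_self_tail _).symm
    rw [hcons u, hcons v, Fin.pi_lex_lt_cons_cons]
    simp only [LinearMap.add_apply, LinearMap.smul_apply, smul_eq_mul]
    exact (hC u hu v hv).trans (or_congr_right (and_congr_right fun _ => hμ u hu v hv))

theorem Pi.lex_map_iff_of_strictMono {ι : Type*} [LT ι] {β γ : ι → Type*}
    [∀ i, LinearOrder (β i)] [∀ i, Preorder (γ i)] {f : ∀ i, β i → γ i} (hf : ∀ i, StrictMono (f i)) {x y : ∀ i, β i} :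
    Pi.Lex (· < ·) (· < ·) (fun i => f i (x i)) (fun i => f i (y i)) ↔
      Pi.Lex (· < ·) (· < ·) x y := by
  simp only [Pi.Lex, (hf _).injective.eq_iff, (hf _).lt_iff_lt]

theorem exists_intLinearMap_eq_pos_mul {M : Type*} [AddCommGroup M] [Module.Free ℤ M]
    [Module.Finite ℤ M] (μ : M →ₗ[ℤ] ℚ) :
    ∃ ν : M →ₗ[ℤ] ℤ, ∃ c : ℚ, 0 < c ∧ ∀ x, μ x = c * ν x := by
  let b := Module.Free.chooseBasis ℤ M
  set d : ℕ := ∏ i, (μ (b i)).den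
  have hd : (0 : ℚ) < d := by positivity
  have hint : ∀ i, ∃ z : ℤ, (z : ℚ) = d * μ (b i) := by
    intro i
    obtain ⟨m, hm⟩ := dvd_prod_of_mem (fun j => (μ (b j)).den) (mem_univ i)
    refine ⟨m * (μ (b i)).num, ?_⟩
    push_cast
    rw [← Rat.mul_den_eq_num, show (d : ℚ) = (μ (b i)).den * m by exact_mod_cast hm]
    ring
  choose z hz using hint
  refine ⟨b.constr ℤ z, (d : ℚ)⁻¹, inv_pos.mpr hd, fun x => ?_⟩
  have hext : (Algebra.linearMap ℤ ℚ).comp (b.constr ℤ z) = (d : ℚ) • μ :=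
    b.ext fun i => by simp [hz]
  have hx : ((b.constr ℤ z x : ℤ) : ℚ) = d * μ x := by simpa using LinearMap.congr_fun hext x
  rw [hx, inv_mul_cancel_left₀ hd.ne']

/-- given linear maps `μ_0,…,μ_s : ℤ^n → ℚ` and a finite set
`U ⊆ ℤ^n`, there is a single integral linear functional `μ : ℤ^n → ℤ`
realizing, on `U`, the lexicographic refinement of the `μ_k`. -/
theorem stmt9 (n s : ℕ) (μs : Fin (s + 1) → ((Fin n → ℤ) →ₗ[ℤ] ℚ))
    (U : Finset (Fin n → ℤ)) :
    ∃ μ : (Fin n → ℤ) →ₗ[ℤ] ℤ, ∀ u ∈ U, ∀ v ∈ U,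
      (μ u < μ v ↔
        ∃ k : Fin (s + 1), μs k u < μs k v ∧ ∀ l : Fin (s + 1), l < k → μs l u = μs l v) := by
  choose ν c hc hμν using fun k => exists_intLinearMap_eq_pos_mul (μs k)
  obtain ⟨μ, hμ⟩ := exists_linearMap_lt_iff_lex ν U
  refine ⟨μ, fun u hu v hv => ?_⟩
  have hmono : ∀ k, StrictMono fun z : ℤ => c k * z := fun k =>
    (strictMono_mul_left_of_pos (hc k)).comp Int.cast_strictMono
  rw [hμ u hu v hv, ← Pi.lex_map_iff_of_strictMono hmono]
  simp only [← hμν, Pi.Lex, and_comm]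
end

section
/- Let 0 < d_1 < ... < d_n be integers, d = (d_1,...,d_n), and ν_d(u) = u_1/d_1 + ... + u_n/d_n for u ∈ Z^n. Let S = S_2 ⊔ ... ⊔ S_{n-1} ⊆ Z_{≥0}^n be a finite set satisfying: (1) |u| = d_i for all u ∈ S_i; (2) for all u ∈ S, either u_1 ≥ 1 or ν_d(u) ≥ 1; (3) d_i·b_i ∉ S_i for all i; (4) some u ∈ S has ν_d(u) < 1. Then there exists a linear map λ : Z^n → Z and a unique index 2 ≤ m ≤ n-1 such that: λ(u) < λ(d_m b_m) for all u ∈ S_i with i ≠ m; max_{u ∈ S_m} λ(u) = λ(d_m b_m); and every u attaining this maximum satisfies ν_d(u) < 1 and u_1 ≥ 1. -/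
/-- `ν_d(u) = u_1/d_1 + ⋯ + u_n/d_n`. -/
noncomputable def nuD {n : ℕ} (d : Fin n → ℕ) (u : Fin n → ℕ) : ℚ :=
  ∑ i, (u i : ℚ) / (d i : ℚ)

/-- `d_i · b_i`, the `i`-th standard basis vector scaled by `d_i`. -/
def dB {n : ℕ} (d : Fin n → ℕ) (i : Fin n) : Fin n → ℕ :=
  fun j => if j = i then d i else 0

/-!
A functional is built lexicographically, one criterion after another, and the criteria are then
merged into a single integral functional: maximizing `f` and then `g` on the maximizers of `f`
is maximizing `N f + g` once `N` exceeds the spread of `g` (`exists_argmaxSet_lex`).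

Write `δ(u) = (1 - ν_d(u)) ∏ d_k`, an integer affine function of `u` vanishing at every
`d_m b_m`. The first criterion is `b δ(u) - a u_1` with `a / b` the largest ratio `δ(u) / u_1`
over the `u ∈ S` with `ν_d(u) < 1` (these have `u_1 ≥ 1` by (2)). It is `≤ 0` on `S`, and
apart from the `d_m b_m`, `m ≥ 2`, it vanishes only at points attaining that ratio (so
`ν_d < 1`, `u_1 ≥ 1`) and at points with `ν_d = 1`, `u_1 = 0`; by (3) and `d_1 < ⋯ < d_n`,
such a point of degree `d_i` has mass on some coordinate `j > i`.

Then, for `k = n - 1, n - 2, …`, the criterion `a u_1 - b (u_{k+1} + ⋯ + u_n)`, with `a / b` the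
smallest ratio of the mass beyond `k` to `u_1` among surviving points with `u_1 ≥ 1`, removes the
`d_m b_m` with `m > k` and the points with `u_1 = 0` having mass beyond `k`; every survivor
then has degree at most `d_k`. Once a survivor with `u_1 ≥ 1` has degree `d_k`, the degree
`|u|` as last criterion leaves exactly `d_k b_k` and such points, and `m = k`.

In the code indices are 0-based and the paper's `u_1` is `u z`.
-/

open Finset

namespace DegenerationOrder

section Argmax

variable {α β : Type*} [LinearOrder β]

def argmaxSet (f : α → β) (X : Finset α) : Finset α :=
  {x ∈ X | ∀ y ∈ X, f y ≤ f x}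

theorem mem_argmaxSet {f : α → β} {X : Finset α} {x : α} :
    x ∈ argmaxSet f X ↔ x ∈ X ∧ ∀ y ∈ X, f y ≤ f x :=
  mem_filter

theorem argmaxSet_subset (f : α → β) (X : Finset α) : argmaxSet f X ⊆ X :=
  filter_subset _ _

theorem argmaxSet_eq_filter {f : α → β} {X : Finset α} {q : α} (hq : q ∈ X)
    (hmax : ∀ x ∈ X, f x ≤ f q) : argmaxSet f X = {x ∈ X | f x = f q} := by
  ext x
  simp only [mem_argmaxSet, mem_filter]
  exact and_congr_right fun hx =>
    ⟨fun h => le_antisymm (hmax x hx) (h q hq), fun h y hy => h ▸ hmax y hy⟩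

theorem exists_argmaxSet_lex (X : Finset α) (f g : α → ℤ) :
    ∃ N : ℤ, argmaxSet (fun x => N * f x + g x) X = argmaxSet g (argmaxSet f X) := by
  rcases X.eq_empty_or_nonempty with rfl | hX
  · exact ⟨0, rfl⟩
  obtain ⟨p, hp, hpmax⟩ := X.exists_max_image f hX
  have hF : argmaxSet f X = {x ∈ X | f x = f p} := argmaxSet_eq_filter hp hpmax
  obtain ⟨q, hqF, hqmax⟩ :=
    (argmaxSet f X).exists_max_image g ⟨p, hF ▸ mem_filter.2 ⟨hp, rfl⟩⟩
  obtain ⟨hq, hqp⟩ := mem_filter.1 (hF ▸ hqF)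
  obtain ⟨r, -, hrmax⟩ := X.exists_max_image g hX
  set N := g r - g q + 1
  have hN : 1 ≤ N := by have := hrmax q hq; omega
  refine ⟨N, ?_⟩
  have hlex : ∀ x ∈ X, N * f x + g x ≤ N * f q + g q ∧
      (N * f x + g x = N * f q + g q ↔ f x = f q ∧ g x = g q) := by
    intro x hx
    rcases (hpmax x hx).lt_or_eq with hlt | heq
    · have : N * f x + g x < N * f q + g q := by nlinarith [hrmax x hx]
      exact ⟨this.le, iff_of_false this.ne fun h => hlt.ne (h.1.trans hqp)⟩
    · have hg := hqmax x (hF ▸ mem_filter.2 ⟨hx, heq⟩)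
      rw [heq, ← hqp]
      exact ⟨by omega, by simp⟩
  rw [argmaxSet_eq_filter hq fun x hx => (hlex x hx).1, argmaxSet_eq_filter hqF hqmax, hF]
  ext x
  simp only [mem_filter]
  constructor
  · rintro ⟨hx, h⟩
    exact ⟨⟨hx, ((hlex x hx).2.1 h).1.trans hqp⟩, ((hlex x hx).2.1 h).2⟩
  · rintro ⟨⟨hx, hf⟩, hg⟩
    exact ⟨hx, (hlex x hx).2.2 ⟨hf.trans hqp.symm, hg⟩⟩

theorem exists_max_ratio (T : Finset α) (hT : T.Nonempty) (p q : α → ℤ)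
    (hq : ∀ u ∈ T, 0 < q u) : ∃ u₀ ∈ T, ∀ u ∈ T, p u * q u₀ ≤ p u₀ * q u := by
  obtain ⟨u₀, hu₀, hmax⟩ := T.exists_max_image (fun u => (p u : ℚ) / q u) hT
  refine ⟨u₀, hu₀, fun u hu => ?_⟩
  have h := hmax u hu
  rw [div_le_div_iff₀ (by exact_mod_cast hq u hu) (by exact_mod_cast hq u₀ hu₀)] at h
  exact_mod_cast h

end Argmax

variable {n : ℕ}

def pairing (c : Fin n → ℤ) (u : Fin n → ℕ) : ℤ :=
  c ⬝ᵥ fun j => (u j : ℤ)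

theorem pairing_smul_add (N : ℤ) (c c' : Fin n → ℤ) (u : Fin n → ℕ) :
    pairing (N • c + c') u = N * pairing c u + pairing c' u := by
  simp only [pairing, add_dotProduct, smul_dotProduct, smul_eq_mul]

theorem exists_argmaxSet_pairing (X : Finset (Fin n → ℕ)) (c c' : Fin n → ℤ) :
    ∃ c'', argmaxSet (pairing c'') X = argmaxSet (pairing c') (argmaxSet (pairing c) X) := by
  obtain ⟨N, hN⟩ := exists_argmaxSet_lex X (pairing c) (pairing c')
  exact ⟨N • c + c', by simpa only [← pairing_smul_add] using hN⟩

theorem pairing_one (u : Fin n → ℕ) : pairing 1 u = ((∑ j, u j : ℕ) : ℤ) := by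
  simp [pairing, one_dotProduct]

theorem dB_apply_of_ne (d : Fin n → ℕ) {m j : Fin n} (h : j ≠ m) : dB d m j = 0 :=
  if_neg h

theorem sum_dB (d : Fin n → ℕ) (m : Fin n) : ∑ j, dB d m j = d m := by
  simp [dB]

theorem pairing_dB (c : Fin n → ℤ) (d : Fin n → ℕ) (m : Fin n) :
    pairing c (dB d m) = c m * d m := by
  rw [pairing, dotProduct, sum_eq_single m fun j _ hj => by simp [dB_apply_of_ne d hj]]
  · simp [dB]
  · simp

theorem eq_dB_of_sum_eq {d : Fin n → ℕ} {u : Fin n → ℕ} {i : Fin n}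
    (hsum : ∑ j, u j = d i) (hzero : ∀ j, j ≠ i → u j = 0) : u = dB d i := by
  funext j
  by_cases hj : j = i
  · subst hj
    rw [sum_eq_single j (fun k _ hk => hzero k hk) (by simp)] at hsum
    simpa [dB] using hsum
  · rw [hzero j hj, dB_apply_of_ne d hj]

section Defect

variable {d : Fin n → ℕ}

def cofactor (d : Fin n → ℕ) : Fin n → ℤ :=
  fun j => ∏ k ∈ univ.erase j, (d k : ℤ)

def defect (d : Fin n → ℕ) (u : Fin n → ℕ) : ℤ :=
  ∏ k, (d k : ℤ) - pairing (cofactor d) u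

theorem defect_dB (d : Fin n → ℕ) (m : Fin n) : defect d (dB d m) = 0 := by
  rw [defect, pairing_dB, cofactor, prod_erase_mul _ _ (mem_univ m), sub_self]

theorem cast_defect (hd : ∀ j, 0 < d j) (u : Fin n → ℕ) :
    (defect d u : ℚ) = (∏ k, (d k : ℚ)) * (1 - nuD d u) := by
  have hdj : ∀ j, (d j : ℚ) ≠ 0 := fun j => by exact_mod_cast (hd j).ne'
  simp only [defect, pairing, dotProduct, cofactor, nuD, mul_sub, mul_one, mul_sum]
  push_cast
  congr 1
  refine sum_congr rfl fun j _ => ?_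
  rw [← prod_erase_mul _ _ (mem_univ j)]
  field_simp [hdj j]

theorem defect_pos_iff (hd : ∀ j, 0 < d j) (u : Fin n → ℕ) :
    0 < defect d u ↔ nuD d u < 1 := by
  have hD : (0 : ℚ) < ∏ k, (d k : ℚ) := prod_pos fun k _ => by exact_mod_cast hd k
  rw [← Int.cast_pos (R := ℚ), cast_defect hd, mul_pos_iff_of_pos_left hD, sub_pos]

theorem defect_eq_zero_iff (hd : ∀ j, 0 < d j) (u : Fin n → ℕ) :
    defect d u = 0 ↔ nuD d u = 1 := by
  have hD : (0 : ℚ) < ∏ k, (d k : ℚ) := prod_pos fun k _ => by exact_mod_cast hd k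
  rw [← Int.cast_eq_zero (α := ℚ), cast_defect hd, mul_eq_zero, or_iff_right hD.ne',
    sub_eq_zero, eq_comm]

/-- Mass at a coordinate `j < i` contributes `1/d_j > 1/d_i` to `ν_d`. -/
theorem exists_lt_pos_of_nuD_eq_one (hd : ∀ j, 0 < d j) (hdmono : StrictMono d)
    {u : Fin n → ℕ} {i : Fin n} (hsum : ∑ j, u j = d i) (hν : nuD d u = 1)
    (hne : u ≠ dB d i) : ∃ j, i < j ∧ 0 < u j := by
  by_contra! htop
  have hdq : ∀ j, (0 : ℚ) < d j := fun j => by exact_mod_cast hd j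
  have hterm : ∀ j, 0 ≤ (u j : ℚ) * ((d j : ℚ)⁻¹ - (d i : ℚ)⁻¹) := fun j => by
    rcases le_or_gt j i with hji | hij
    · exact mul_nonneg (by positivity)
        (sub_nonneg.2 (inv_anti₀ (hdq j) (by exact_mod_cast hdmono.monotone hji)))
    · simp [Nat.le_zero.1 (htop j hij)]
  have hzero : ∑ j, (u j : ℚ) * ((d j : ℚ)⁻¹ - (d i : ℚ)⁻¹) = 0 := by
    have hsumq : ∑ j, (u j : ℚ) = d i := by exact_mod_cast hsum
    rw [nuD] at hν
    simp only [mul_sub, sum_sub_distrib, ← div_eq_mul_inv, ← sum_div, hsumq, hν]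
    rw [div_self (hdq i).ne', sub_self]
  apply hne
  refine eq_dB_of_sum_eq hsum fun j hj => ?_
  rcases hj.lt_or_gt with hji | hij
  · have h := (sum_eq_zero_iff_of_nonneg fun j _ => hterm j).1 hzero j (mem_univ j)
    have hlt : (d i : ℚ)⁻¹ < (d j : ℚ)⁻¹ :=
      inv_strictAnti₀ (hdq j) (by exact_mod_cast hdmono hji)
    exact_mod_cast (mul_eq_zero.1 h).resolve_right (sub_ne_zero.2 hlt.ne')
  · exact Nat.le_zero.1 (htop j hij)

end Defect

section Faces

variable (d : Fin n → ℕ) (z : Fin n)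

def IsCandidate (k : Fin n) (u : Fin n → ℕ) : Prop :=
  1 ≤ u z ∧ ∃ i, z < i ∧ i ≤ k ∧ ∑ j, u j = d i

def IsOverflow (u : Fin n → ℕ) : Prop :=
  u z = 0 ∧ ∃ i, ∑ j, u j = d i ∧ ∃ j, i < j ∧ 0 < u j

structure Admissible (k : Fin n) (Y : Finset (Fin n → ℕ)) : Prop where
  dB_mem : ∀ m, z < m → m ≤ k → dB d m ∈ Y
  cases : ∀ u ∈ Y, (∃ m, z < m ∧ u = dB d m) ∨ IsCandidate d z k u ∨ IsOverflow d z u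
  exists_candidate : ∃ u ∈ Y, IsCandidate d z k u

def IsFaceAt (m : Fin n) (A : Finset (Fin n → ℕ)) : Prop :=
  dB d m ∈ A ∧ (∃ u ∈ A, 1 ≤ u z) ∧ ∀ u ∈ A, u = dB d m ∨ 1 ≤ u z ∧ ∑ j, u j = d m

variable {d z}

theorem IsOverflow.sum_lt (hdmono : StrictMono d) {u : Fin n → ℕ} (hu : IsOverflow d z u)
    {k : Fin n} (htail : ∀ j, k < j → u j = 0) : ∑ j, u j < d k := by
  obtain ⟨-, i, hi, j, hij, hj⟩ := hu
  have hjk : j ≤ k := not_lt.1 fun h => hj.ne' (htail j h)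
  exact hi ▸ hdmono (hij.trans_le hjk)

theorem Admissible.lt {k : Fin n} {Y : Finset (Fin n → ℕ)} (hY : Admissible d z k Y) : z < k := by
  obtain ⟨-, -, -, i, hzi, hik, -⟩ := hY.exists_candidate
  exact hzi.trans_le hik

theorem Admissible.exists_lt {k : Fin n} {Y : Finset (Fin n → ℕ)} (hY : Admissible d z k Y)
    (hno : ∀ u ∈ Y, 1 ≤ u z → ∑ j, u j ≠ d k) : ∃ k' < k, Admissible d z k' Y := by
  have hzk := hY.lt
  set k' : Fin n := ⟨k - 1, by omega⟩
  have hle : ∀ {u : Fin n → ℕ}, u ∈ Y → IsCandidate d z k u → IsCandidate d z k' u := by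
    rintro u hu ⟨hz, i, hzi, hik, hi⟩
    have : i ≠ k := fun h => hno u hu hz (h ▸ hi)
    exact ⟨hz, i, hzi, Fin.le_def.2 (by simp only [k']; omega), hi⟩
  have hk' : k' < k := Fin.lt_def.2 (by simp only [k']; omega)
  obtain ⟨u, hu, hc⟩ := hY.exists_candidate
  exact ⟨k', hk', fun m hzm hmk => hY.dB_mem m hzm (hmk.trans hk'.le),
    fun u hu => (hY.cases u hu).imp_right (Or.imp_left (hle hu)), u, hu, hle hu hc⟩

def tail (k : Fin n) : Fin n → ℤ := fun j => if k < j then 1 else 0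

theorem pairing_tail_nonneg (k : Fin n) (u : Fin n → ℕ) : 0 ≤ pairing (tail k) u := by
  rw [pairing, dotProduct]
  exact sum_nonneg fun j _ => by simp only [tail]; split_ifs <;> positivity

theorem pairing_tail_eq_zero {k : Fin n} {u : Fin n → ℕ} :
    pairing (tail k) u = 0 ↔ ∀ j, k < j → u j = 0 := by
  rw [pairing, dotProduct, sum_eq_zero_iff_of_nonneg fun j _ => by
    unfold tail; split_ifs <;> simp]
  refine ⟨fun h j hj => ?_, fun h j _ => ?_⟩
  · simpa [tail, hj] using h j (mem_univ j)
  · simp only [tail]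
    split_ifs with hj
    · simp [h j hj]
    · simp

theorem Admissible.sum_le (hdmono : StrictMono d) {k : Fin n} {Y : Finset (Fin n → ℕ)}
    (hY : Admissible d z k Y) {u : Fin n → ℕ} (hu : u ∈ Y)
    (htail : u z = 0 → ∀ j, k < j → u j = 0) :
    ∑ j, u j ≤ d k ∧ (∑ j, u j = d k → u = dB d k ∨ 1 ≤ u z) := by
  rcases hY.cases u hu with ⟨m, hzm, rfl⟩ | ⟨hz, i, -, hik, hi⟩ | hover
  · have hmk : m ≤ k := not_lt.1 fun hkm => by
      have := htail (dB_apply_of_ne d hzm.ne) m hkm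
      simp only [dB, if_pos] at this
      have := hdmono hkm
      omega
    rw [sum_dB]
    exact ⟨hdmono.monotone hmk, fun h => .inl (hdmono.injective h ▸ rfl)⟩
  · rw [hi]
    exact ⟨hdmono.monotone hik, fun _ => .inr hz⟩
  · have := hover.sum_lt hdmono (htail hover.1)
    exact ⟨this.le, fun h => (this.ne h).elim⟩

theorem Admissible.exists_tail_functional {k : Fin n} {Y : Finset (Fin n → ℕ)}
    (hY : Admissible d z k Y) :
    ∃ c, (∀ u ∈ Y, pairing c u ≤ 0) ∧ (∃ u ∈ Y, IsCandidate d z k u ∧ pairing c u = 0) ∧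
      ∀ u, u z = 0 → (pairing c u = 0 ↔ ∀ j, k < j → u j = 0) := by
  classical
  set C := Y.filter (IsCandidate d z k)
  have hC : C.Nonempty := by
    obtain ⟨u, hu, hc⟩ := hY.exists_candidate
    exact ⟨u, mem_filter.2 ⟨hu, hc⟩⟩
  obtain ⟨u₀, hu₀C, hu₀⟩ := exists_max_ratio C hC (fun u => -pairing (tail k) u)
    (fun u => (u z : ℤ)) fun u hu => by have := (mem_filter.1 hu).2.1; omega
  obtain ⟨hu₀Y, hu₀c⟩ := mem_filter.1 hu₀C
  have hb : (0 : ℤ) < u₀ z := by have := hu₀c.1; omega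
  set c := pairing (tail k) u₀ • Pi.single z 1 - (u₀ z : ℤ) • tail k
  have hc : ∀ u, pairing c u = pairing (tail k) u₀ * u z - u₀ z * pairing (tail k) u :=
    fun u => by simp only [c, pairing, sub_dotProduct, smul_dotProduct, single_dotProduct,
      smul_eq_mul, one_mul]
  have hc_z : ∀ u, u z = 0 → (pairing c u = 0 ↔ ∀ j, k < j → u j = 0) := fun u hu => by
    rw [hc, hu, ← pairing_tail_eq_zero, Nat.cast_zero, mul_zero, zero_sub, neg_eq_zero,
      mul_eq_zero, or_iff_right hb.ne']
  refine ⟨c, fun u hu => ?_, ⟨u₀, hu₀Y, hu₀c, by rw [hc]; ring⟩, hc_z⟩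
  have hle_z : u z = 0 → pairing c u ≤ 0 := fun hz => by
    rw [hc, hz, Nat.cast_zero]
    nlinarith [pairing_tail_nonneg k u]
  rcases hY.cases u hu with ⟨m, hzm, rfl⟩ | hcand | ⟨hz, -⟩
  · exact hle_z (dB_apply_of_ne d hzm.ne)
  · have := hu₀ u (mem_filter.2 ⟨hu, hcand⟩)
    rw [hc]
    linarith
  · exact hle_z hz

theorem Admissible.exists_argmaxSet (hdmono : StrictMono d) {k : Fin n}
    {Y : Finset (Fin n → ℕ)} (hY : Admissible d z k Y) :
    ∃ c, Admissible d z k (argmaxSet (pairing c) Y) ∧ ∀ u ∈ argmaxSet (pairing c) Y,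
      ∑ j, u j ≤ d k ∧ (∑ j, u j = d k → u = dB d k ∨ 1 ≤ u z) := by
  obtain ⟨c, hle, ⟨u₀, hu₀Y, hu₀c, hc₀⟩, hc_z⟩ := hY.exists_tail_functional
  have hY1 : argmaxSet (pairing c) Y = Y.filter (pairing c · = 0) := by
    rw [argmaxSet_eq_filter hu₀Y (hc₀ ▸ hle), hc₀]
  have hmem : ∀ u ∈ Y, pairing c u = 0 → u ∈ argmaxSet (pairing c) Y := fun u hu h =>
    hY1 ▸ mem_filter.2 ⟨hu, h⟩
  refine ⟨c, ⟨fun m hzm hmk => hmem _ (hY.dB_mem m hzm hmk) ?_, fun u hu => hY.cases u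
    (argmaxSet_subset _ _ hu), u₀, hmem u₀ hu₀Y hc₀, hu₀c⟩, fun u hu => ?_⟩
  · exact (hc_z _ (dB_apply_of_ne d hzm.ne)).2 fun j hj =>
      dB_apply_of_ne d (hmk.trans_lt hj).ne'
  · rw [hY1, mem_filter] at hu
    exact hY.sum_le hdmono hu.1 fun hz => (hc_z u hz).1 hu.2

theorem isFaceAt_argmaxSet_one {k : Fin n} {Y : Finset (Fin n → ℕ)} (hk : dB d k ∈ Y)
    (hdeg : ∀ u ∈ Y, ∑ j, u j ≤ d k ∧ (∑ j, u j = d k → u = dB d k ∨ 1 ≤ u z))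
    (hex : ∃ u ∈ Y, 1 ≤ u z ∧ ∑ j, u j = d k) : IsFaceAt d z k (argmaxSet (pairing 1) Y) := by
  have hval (u : Fin n → ℕ) : pairing 1 u = pairing 1 (dB d k) ↔ ∑ j, u j = d k := by
    rw [pairing_one, pairing_one, sum_dB]
    exact Nat.cast_inj
  rw [argmaxSet_eq_filter hk fun u hu => by
    rw [pairing_one, pairing_one, sum_dB]; exact_mod_cast (hdeg u hu).1]
  obtain ⟨u, hu, hz, hsum⟩ := hex
  refine ⟨mem_filter.2 ⟨hk, rfl⟩, ⟨u, mem_filter.2 ⟨hu, (hval u).2 hsum⟩, hz⟩, fun v hv => ?_⟩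
  obtain ⟨hv, hsum⟩ := mem_filter.1 hv
  rw [hval] at hsum
  exact ((hdeg v hv).2 hsum).imp_right fun h => ⟨h, hsum⟩

theorem Admissible.exists_isFaceAt (hdmono : StrictMono d) {k : Fin n}
    {Y : Finset (Fin n → ℕ)} (hY : Admissible d z k Y) :
    ∃ c m, z < m ∧ m ≤ k ∧ IsFaceAt d z m (argmaxSet (pairing c) Y) := by
  induction k using WellFoundedLT.induction generalizing Y with
  | _ k ih =>
  obtain ⟨c₁, hY₁, hdeg⟩ := hY.exists_argmaxSet hdmono
  by_cases hex : ∃ u ∈ argmaxSet (pairing c₁) Y, 1 ≤ u z ∧ ∑ j, u j = d k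
  · obtain ⟨c, hc⟩ := exists_argmaxSet_pairing Y c₁ 1
    exact ⟨c, k, hY.lt, le_rfl,
      hc ▸ isFaceAt_argmaxSet_one (hY₁.dB_mem k hY.lt le_rfl) hdeg hex⟩
  · push Not at hex
    obtain ⟨k', hk', hY'⟩ := hY₁.exists_lt hex
    obtain ⟨c', m, hzm, hmk, hface⟩ := ih k' hk' hY'
    obtain ⟨c, hc⟩ := exists_argmaxSet_pairing Y c₁ c'
    exact ⟨c, m, hzm, hmk.trans hk'.le, hc ▸ hface⟩

end Faces

section FirstStep

variable {d : Fin n → ℕ} {z : Fin n}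

theorem mul_defect_le (hd : ∀ j, 0 < d j) {a b : ℤ} (ha : 0 < a) (hb : 0 < b)
    {u : Fin n → ℕ} (hfirst : 1 ≤ u z ∨ 1 ≤ nuD d u)
    (hratio : nuD d u < 1 → b * defect d u ≤ a * u z) :
    b * defect d u ≤ a * u z ∧
      (b * defect d u = a * u z → nuD d u < 1 ∧ 1 ≤ u z ∨ nuD d u = 1 ∧ u z = 0) := by
  by_cases hν : nuD d u < 1
  · exact ⟨hratio hν, fun _ => .inl ⟨hν, hfirst.resolve_right (not_le.2 hν)⟩⟩
  have hδ : defect d u ≤ 0 := not_lt.1 ((defect_pos_iff hd u).not.2 hν)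
  have hz : (0 : ℤ) ≤ a * u z := by positivity
  refine ⟨(mul_nonpos_of_nonneg_of_nonpos hb.le hδ).trans hz, fun h => .inr ⟨?_, ?_⟩⟩
  · rw [← defect_eq_zero_iff hd]
    nlinarith
  · have : a * u z = 0 := by nlinarith
    exact_mod_cast (mul_eq_zero.1 this).resolve_left ha.ne'

theorem Admissible.of_nuD_cases (hd : ∀ j, 0 < d j) (hdmono : StrictMono d) {k : Fin n}
    {U Y : Finset (Fin n → ℕ)} (hU : ∀ u ∈ U, ∃ i, z < i ∧ i ≤ k ∧ ∑ j, u j = d i ∧ u ≠ dB d i)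
    (hYX : Y ⊆ U ∪ (Ioi z).image (dB d)) (hB : ∀ m, z < m → dB d m ∈ Y)
    (hYU : ∀ u ∈ Y, u ∈ U → nuD d u < 1 ∧ 1 ≤ u z ∨ nuD d u = 1 ∧ u z = 0)
    (hex : ∃ u ∈ Y, u ∈ U ∧ 1 ≤ u z) : Admissible d z k Y := by
  refine ⟨fun m hzm _ => hB m hzm, fun u hu => ?_, ?_⟩
  · rcases mem_union.1 (hYX hu) with hUu | hBu
    · obtain ⟨i, hzi, hik, hi, hne⟩ := hU u hUu
      rcases hYU u hu hUu with ⟨-, hz⟩ | ⟨hν, hz⟩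
      · exact .inr (.inl ⟨hz, i, hzi, hik, hi⟩)
      · exact .inr (.inr ⟨hz, i, hi, exists_lt_pos_of_nuD_eq_one hd hdmono hi hν hne⟩)
    · obtain ⟨m, hm, rfl⟩ := mem_image.1 hBu
      exact .inl ⟨m, mem_Ioi.1 hm, rfl⟩
  · obtain ⟨u, hu, hUu, hz⟩ := hex
    obtain ⟨i, hzi, hik, hi, -⟩ := hU u hUu
    exact ⟨u, hu, hz, i, hzi, hik, hi⟩

theorem exists_admissible_argmaxSet (hd : ∀ j, 0 < d j) (hdmono : StrictMono d) {k : Fin n}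
    (U : Finset (Fin n → ℕ)) (hU : ∀ u ∈ U, ∃ i, z < i ∧ i ≤ k ∧ ∑ j, u j = d i ∧ u ≠ dB d i)
    (hfirst : ∀ u ∈ U, 1 ≤ u z ∨ 1 ≤ nuD d u) (hlow : ∃ u ∈ U, nuD d u < 1) :
    ∃ c, Admissible d z k (argmaxSet (pairing c) (U ∪ (Ioi z).image (dB d))) ∧
      ∀ u ∈ argmaxSet (pairing c) (U ∪ (Ioi z).image (dB d)), u ∈ U → 1 ≤ u z →
        nuD d u < 1 := by
  classical
  set T := U.filter (nuD d · < 1)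
  have hTz : ∀ u ∈ T, (0 : ℤ) < u z := fun u hu => by
    obtain ⟨hu, hν⟩ := mem_filter.1 hu
    have := (hfirst u hu).resolve_right (not_le.2 hν)
    omega
  obtain ⟨u₀, hu₀T, hu₀⟩ := exists_max_ratio T
    (let ⟨u, hu, hν⟩ := hlow; ⟨u, mem_filter.2 ⟨hu, hν⟩⟩) (defect d) (fun u => (u z : ℤ)) hTz
  obtain ⟨hu₀U, hu₀ν⟩ := mem_filter.1 hu₀T
  have ha : 0 < defect d u₀ := (defect_pos_iff hd u₀).2 hu₀ν
  set φ : (Fin n → ℕ) → ℤ := fun u => u₀ z * defect d u - defect d u₀ * u z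
  set c := -(defect d u₀ • Pi.single z 1 + (u₀ z : ℤ) • cofactor d)
  have hc : ∀ u, pairing c u = φ u - u₀ z * ∏ k, (d k : ℤ) := fun u => by
    simp only [c, φ, defect, pairing, neg_dotProduct, add_dotProduct, smul_dotProduct,
      single_dotProduct, smul_eq_mul, one_mul]
    ring
  have hφU : ∀ u ∈ U, φ u ≤ 0 ∧ (φ u = 0 → nuD d u < 1 ∧ 1 ≤ u z ∨ nuD d u = 1 ∧ u z = 0) :=
    fun u hu => by
      have h := mul_defect_le hd ha (hTz u₀ hu₀T) (hfirst u hu) fun hν => by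
        have := hu₀ u (mem_filter.2 ⟨hu, hν⟩)
        linarith
      exact ⟨by simp only [φ]; linarith [h.1], fun h0 => h.2 (by simp only [φ] at h0; linarith)⟩
  have hφB : ∀ m, z < m → φ (dB d m) = 0 := fun m hzm => by
    simp [φ, defect_dB, dB_apply_of_ne d hzm.ne]
  have hφ₀ : φ u₀ = 0 := by simp only [φ]; ring
  set X := U ∪ (Ioi z).image (dB d)
  have hY : argmaxSet (pairing c) X = X.filter (φ · = 0) := by
    rw [argmaxSet_eq_filter (mem_union_left _ hu₀U) fun u hu => ?_]
    · simp only [hc, hφ₀, sub_left_inj]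
      rfl
    rcases mem_union.1 hu with hu | hu
    · simp only [hc, hφ₀]; linarith [(hφU u hu).1]
    · obtain ⟨m, hm, rfl⟩ := mem_image.1 hu
      simp only [hc, hφ₀, hφB m (mem_Ioi.1 hm), le_refl]
  have hYU : ∀ u ∈ argmaxSet (pairing c) X, u ∈ U →
      nuD d u < 1 ∧ 1 ≤ u z ∨ nuD d u = 1 ∧ u z = 0 := fun u hu hUu =>
    (hφU u hUu).2 (mem_filter.1 (hY ▸ hu :)).2
  refine ⟨c, Admissible.of_nuD_cases hd hdmono hU (argmaxSet_subset _ _)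
    (fun m hzm => hY ▸ mem_filter.2 ⟨mem_union_right _ (mem_image_of_mem _ (mem_Ioi.2 hzm)),
      hφB m hzm⟩) hYU
    ⟨u₀, hY ▸ mem_filter.2 ⟨mem_union_left _ hu₀U, hφ₀⟩, hu₀U, by have := hTz u₀ hu₀T; omega⟩,
    fun u hu hUu hz => ((hYU u hu hUu).resolve_right fun h => by omega).1⟩

end FirstStep
section Selection

variable {d : Fin n → ℕ} {z : Fin n} {m : Fin n} {S : Fin n → Finset (Fin n → ℕ)}

theorem IsFaceAt.selects (hdmono : StrictMono d) {f : (Fin n → ℕ) → ℤ}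
    {X : Finset (Fin n → ℕ)} (hface : IsFaceAt d z m (argmaxSet f X))
    (hSX : ∀ i, ∀ u ∈ S i, u ∈ X) (hXS : ∀ u ∈ X, 1 ≤ u z → ∃ i, u ∈ S i)
    (h1 : ∀ i, ∀ u ∈ S i, ∑ j, u j = d i) (h3 : ∀ i, dB d i ∉ S i) :
    (∀ i, i ≠ m → ∀ u ∈ S i, f u < f (dB d m)) ∧ (∀ u ∈ S m, f u ≤ f (dB d m)) ∧
      (∃ u ∈ S m, f u = f (dB d m)) ∧
      ∀ u ∈ S m, f u = f (dB d m) → u ∈ argmaxSet f X ∧ 1 ≤ u z := by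
  obtain ⟨hdBm, ⟨v, hvA, hvz⟩, hface⟩ := hface
  have hmax : ∀ u ∈ X, f u ≤ f (dB d m) := (mem_argmaxSet.1 hdBm).2
  have hmemA : ∀ u ∈ X, f u = f (dB d m) → u ∈ argmaxSet f X := fun u hu heq =>
    mem_argmaxSet.2 ⟨hu, heq ▸ hmax⟩
  have hA : ∀ i, ∀ u ∈ S i, u ∈ argmaxSet f X → i = m ∧ 1 ≤ u z := fun i u hu huA => by
    rcases hface u huA with rfl | ⟨hz, hsum⟩
    · obtain rfl : i = m := hdmono.injective ((h1 i _ hu).symm.trans (sum_dB d m))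
      exact (h3 i hu).elim
    · exact ⟨hdmono.injective ((h1 i u hu).symm.trans hsum), hz⟩
  obtain ⟨i, hi⟩ := hXS v (argmaxSet_subset _ _ hvA) hvz
  obtain rfl := (hA i v hi hvA).1
  refine ⟨fun j hj u hu => (hmax u (hSX j u hu)).lt_of_ne fun h =>
      hj (hA j u hu (hmemA u (hSX j u hu) h)).1,
    fun u hu => hmax u (hSX i u hu),
    ⟨v, hi, le_antisymm (hmax v (hSX i v hi))
      ((mem_argmaxSet.1 hvA).2 _ (argmaxSet_subset _ _ hdBm))⟩,
    fun u hu h => ⟨hmemA u (hSX i u hu) h, (hA i u hu (hmemA u (hSX i u hu) h)).2⟩⟩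

theorem exists_pairing_selecting (hd : ∀ j, 0 < d j) (hdmono : StrictMono d) {k : Fin n}
    (hS : ∀ i, ∀ u ∈ S i, z < i ∧ i ≤ k) (h1 : ∀ i, ∀ u ∈ S i, ∑ j, u j = d i)
    (h2 : ∀ i, ∀ u ∈ S i, 1 ≤ u z ∨ 1 ≤ nuD d u) (h3 : ∀ i, dB d i ∉ S i)
    (h4 : ∃ i, ∃ u ∈ S i, nuD d u < 1) :
    ∃ c m, z < m ∧ m ≤ k ∧
      (∀ i, i ≠ m → ∀ u ∈ S i, pairing c u < pairing c (dB d m)) ∧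
      (∀ u ∈ S m, pairing c u ≤ pairing c (dB d m)) ∧
      (∃ u ∈ S m, pairing c u = pairing c (dB d m)) ∧
      (∀ u ∈ S m, pairing c u = pairing c (dB d m) → nuD d u < 1 ∧ 1 ≤ u z) := by
  set U := univ.biUnion S
  have hmemU : ∀ i, ∀ u ∈ S i, u ∈ U := fun i u hu => mem_biUnion.2 ⟨i, mem_univ i, hu⟩
  have hindex : ∀ u ∈ U, ∃ i, u ∈ S i := fun u hu =>
    let ⟨i, _, hi⟩ := mem_biUnion.1 hu; ⟨i, hi⟩
  obtain ⟨c₀, hY, hν⟩ := exists_admissible_argmaxSet hd hdmono U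
    (fun u hu => let ⟨i, hi⟩ := hindex u hu
      ⟨i, (hS i u hi).1, (hS i u hi).2, h1 i u hi, fun h => h3 i (h ▸ hi)⟩)
    (fun u hu => let ⟨i, hi⟩ := hindex u hu; h2 i u hi)
    (let ⟨i, u, hu, hlt⟩ := h4; ⟨u, hmemU i u hu, hlt⟩)
  obtain ⟨c', m, hzm, hmk, hface⟩ := hY.exists_isFaceAt hdmono
  set X := U ∪ (Ioi z).image (dB d)
  obtain ⟨c, hc⟩ := exists_argmaxSet_pairing X c₀ c'
  have hXS : ∀ u ∈ X, 1 ≤ u z → ∃ i, u ∈ S i := fun u hu hz => by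
    rcases mem_union.1 hu with hUu | hBu
    · exact hindex u hUu
    · obtain ⟨m', hm', rfl⟩ := mem_image.1 hBu
      rw [dB_apply_of_ne d (mem_Ioi.1 hm').ne] at hz
      omega
  obtain ⟨hlt, hle, hex, hatt⟩ := (hc ▸ hface).selects hdmono
    (fun i u hu => mem_union_left _ (hmemU i u hu)) hXS h1 h3
  refine ⟨c, m, hzm, hmk, hlt, hle, hex, fun u hu heq => ?_⟩
  obtain ⟨huA, hz⟩ := hatt u hu heq
  exact ⟨hν u (argmaxSet_subset _ _ (hc ▸ huA)) (hmemU m u hu) hz, hz⟩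

end Selection

end DegenerationOrder

open DegenerationOrder in
/-- the degeneration-order combinatorial lemma.  Coordinates are
0-indexed, so the paper's `u_1` is `u 0` and the sets `S_2,…,S_{n-1}` are the
`S i` with `0 < i < n - 1`. -/
theorem stmt10 (n : ℕ) (hn : 3 ≤ n) (d : Fin n → ℕ)
    (hd0 : 0 < d ⟨0, by omega⟩) (hdmono : StrictMono d)
    (S : Fin n → Finset (Fin n → ℕ))
    (hSdom : ∀ i : Fin n, ((i : ℕ) = 0 ∨ (i : ℕ) = n - 1) → S i = ∅)
    (h1 : ∀ i : Fin n, ∀ u ∈ S i, ∑ j, u j = d i)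
    (h2 : ∀ i : Fin n, ∀ u ∈ S i, 1 ≤ u ⟨0, by omega⟩ ∨ 1 ≤ nuD d u)
    (h3 : ∀ i : Fin n, dB d i ∉ S i)
    (h4 : ∃ i : Fin n, ∃ u ∈ S i, nuD d u < 1) :
    ∃ lam : (Fin n → ℤ) →ₗ[ℤ] ℤ, ∃! m : Fin n,
      (0 < (m : ℕ) ∧ (m : ℕ) < n - 1) ∧
      (∀ i : Fin n, i ≠ m → ∀ u ∈ S i,
        lam (fun j => (u j : ℤ)) < lam (fun j => (dB d m j : ℤ))) ∧
      (∀ u ∈ S m, lam (fun j => (u j : ℤ)) ≤ lam (fun j => (dB d m j : ℤ))) ∧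
      (∃ u ∈ S m, lam (fun j => (u j : ℤ)) = lam (fun j => (dB d m j : ℤ))) ∧
      (∀ u ∈ S m, lam (fun j => (u j : ℤ)) = lam (fun j => (dB d m j : ℤ)) →
        nuD d u < 1 ∧ 1 ≤ u ⟨0, by omega⟩) := by
  have hd : ∀ j, 0 < d j := fun j => hd0.trans_le (hdmono.monotone (Fin.le_def.2 (Nat.zero_le j)))
  have hS : ∀ i, ∀ u ∈ S i, (⟨0, by omega⟩ : Fin n) < i ∧ i ≤ ⟨n - 2, by omega⟩ :=
    fun i u hu => by
      have hi0 : (i : ℕ) ≠ 0 := fun h => by simp [hSdom i (.inl h)] at hu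
      have hi1 : (i : ℕ) ≠ n - 1 := fun h => by simp [hSdom i (.inr h)] at hu
      exact ⟨Fin.lt_def.2 (by simp only; omega), Fin.le_def.2 (by simp only; omega)⟩
  obtain ⟨c, m, hzm, hmk, hlt, hle, hex, hatt⟩ :=
    exists_pairing_selecting hd hdmono hS h1 h2 h3 h4
  refine ⟨dotProductEquiv ℤ (Fin n) c, m,
    ⟨⟨hzm, by have := Fin.le_def.1 hmk; simp only at this; omega⟩, hlt, hle, hex, hatt⟩, ?_⟩
  rintro m' ⟨-, hlt', -, ⟨v, hv, hveq⟩, -⟩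
  by_contra hne
  obtain ⟨u, hu, hueq⟩ := hex
  exact lt_irrefl _ ((hueq.symm.trans_lt (hlt' m (Ne.symm hne) u hu)).trans_eq hveq.symm
    |>.trans (hlt m' hne v hv))
end

section
/- Let k be an algebraically closed field, R = k[x_1,...,x_j], and q a homogeneous prime ideal of height j-1 with x_j ∉ q. Then with respect to the reverse lexicographic order, for all m > 0 the initial ideal of q^m equals (x_1,...,x_{j-1})^m. -/
open MvPolynomial

/-- The reverse lexicographic order on exponent vectors: `a > b` iff the last
coordinates agree down to some index where `a` is *smaller*. -/
def rvGT {m : ℕ} (a b : Fin m →₀ ℕ) : Prop :=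
  ∃ i : Fin m, (∀ j : Fin m, i < j → a j = b j) ∧ a i < b i

-- The initial term of a polynomial with respect to the reverse lexicographic order.
open scoped Classical in
noncomputable def iniT {k : Type*} [Field k] {m : ℕ} (f : MvPolynomial (Fin m) k) :
    MvPolynomial (Fin m) k :=
  ∑ a ∈ f.support.filter fun a => ∀ b ∈ f.support, ¬ rvGT b a,
    monomial a (MvPolynomial.coeff a f)

/-- The initial ideal: generated by initial terms of elements of `J`. -/
noncomputable def iniIdeal {k : Type*} [Field k] {m : ℕ}
    (J : Ideal (MvPolynomial (Fin m) k)) : Ideal (MvPolynomial (Fin m) k) :=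
  Ideal.span {g | ∃ f ∈ J, g = iniT f}

/-- The height of an ideal: the infimum of the heights of primes containing it. -/
noncomputable def htIdeal {R : Type*} [CommRing R] (I : Ideal R) : ℕ∞ :=
  ⨅ p ∈ {p : PrimeSpectrum R | I ≤ p.asIdeal}, Order.height p

/-!
By the Nullstellensatz `q` has a zero `z` with `z_last ≠ 0`. As `q` is homogeneous it vanishes
on the line `k • z`, hence lies in the vanishing ideal `p = (x_i - a_i x_last)_i` of that line,
where `a_i = z_i / z_last`. Since `q ⊆ p ⊊ (x_0, …, x_n)` are primes in a ring of dimension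
`n + 1` and `q` has height `n`, `q = p`.

Now `p ^ m` is the image of `(x_0, …, x_{n-1}) ^ m` under the automorphism
`x_i ↦ x_i - a_i x_last`. That automorphism only adds terms with a larger power of `x_last`, which
are revlex-smaller, so it preserves the revlex-leading term of every polynomial, and the initial
ideal of `p ^ m` is the monomial ideal `(x_0, …, x_{n-1}) ^ m`.
-/

namespace RevlexInitialIdeal

theorem eq_of_le_of_lt_of_le_height {R : Type*} [CommRing R] {d : ℕ}
    (hdim : ringKrullDim R ≤ (d + 1 : ℕ)) {q p P : PrimeSpectrum R} (hqp : q ≤ p) (hpP : p < P)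
    (hq : (d : ℕ∞) ≤ Order.height q) : q = p := by
  by_contra hne
  have hbound (x : PrimeSpectrum R) : Order.height x ≤ d + 1 := by
    exact_mod_cast (Order.height_le_krullDim x).trans hdim
  have hfin (x : PrimeSpectrum R) : Order.height x < ⊤ := (hbound x).trans_lt (by simp)
  have h1 := Order.height_strictMono (lt_of_le_of_ne hqp hne) (hfin q)
  have h2 := Order.height_strictMono hpP (hfin p)
  have h3 := hbound P
  lift Order.height P to ℕ using (hfin P).ne with hgtP
  lift Order.height p to ℕ using (hfin p).ne with hgtp
  lift Order.height q to ℕ using (hfin q).ne with hgtq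
  norm_cast at *
  omega

theorem ringKrullDim_mvPolynomial_fin (k : Type*) [Field k] (m : ℕ) :
    ringKrullDim (MvPolynomial (Fin m) k) = m := by
  rw [ringKrullDim_of_isNoetherianRing, ringKrullDim_eq_zero_of_field, Nat.card_fin, zero_add]

theorem isPrime_span_X_image {R σ : Type*} [CommRing R] [IsDomain R] (s : Set σ) :
    (Ideal.span (X (R := R) '' s)).IsPrime := by
  classical
  set I : Ideal (MvPolynomial σ R) := Ideal.span (X '' s)
  set π : MvPolynomial σ R →ₐ[R] MvPolynomial σ R := aeval fun i => if i ∈ s then 0 else X i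
  have hmod : (Ideal.Quotient.mkₐ R I).comp π = Ideal.Quotient.mkₐ R I := by
    refine algHom_ext fun i => ?_
    by_cases hi : i ∈ s
    · simp only [AlgHom.comp_apply, π, aeval_X, if_pos hi, map_zero]
      have hXi : X i ∈ I := Ideal.subset_span ⟨i, hi, rfl⟩
      exact (Ideal.Quotient.eq_zero_iff_mem.2 hXi).symm
    · simp [π, hi]
  have hker : I = RingHom.ker π := by
    refine le_antisymm (Ideal.span_le.2 ?_) fun f hf => ?_
    · rintro _ ⟨i, hi, rfl⟩
      simp [π, hi]
    · have hsub : f - π f ∈ I := (Ideal.Quotient.mk_eq_mk_iff_sub_mem _ _).1 congr($hmod f).symm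
      rwa [RingHom.mem_ker.1 hf, sub_zero] at hsub
  rw [hker]
  exact RingHom.ker_isPrime _

theorem _root_.MvPolynomial.IsHomogeneous.eval_smul {R σ : Type*} [CommSemiring R]
    {g : MvPolynomial σ R} {e : ℕ} (hg : g.IsHomogeneous e) (t : R) (z : σ → R) :
    eval (t • z) g = t ^ e * eval z g := by
  rw [eval_eq, eval_eq, Finset.mul_sum]
  refine Finset.sum_congr rfl fun d hd => ?_
  have hdeg : ∑ i ∈ d.support, d i = e := by
    simpa [Finsupp.weight_apply, Finsupp.sum] using hg (mem_support_iff.1 hd)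
  simp_rw [Pi.smul_apply, smul_eq_mul, mul_pow, Finset.prod_mul_distrib,
    Finset.prod_pow_eq_pow_sum, hdeg]
  ring

section Revlex

variable {m : ℕ}

theorem rvGT_iff_toColex_lt {a b : Fin m →₀ ℕ} : rvGT a b ↔ toColex a < toColex b := Iff.rfl

theorem iniT_eq_monomial_of_sub_mem {k : Type*} [Field k] {f : MvPolynomial (Fin m) k}
    {β : Fin m →₀ ℕ} {c : k} (hc : c ≠ 0)
    (hf : f - monomial β c ∈ restrictSupport k {α | toColex β < toColex α}) :
    iniT f = monomial β c := by
  classical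
  rw [mem_restrictSupport_iff] at hf
  have hcoeff : coeff β f = c := by
    by_contra h
    have : β ∈ (f - monomial β c).support := by simpa [sub_eq_zero] using h
    exact lt_irrefl (toColex β) (hf this)
  have hsupp : ∀ α ∈ f.support, α ≠ β → toColex β < toColex α := fun α hα hne =>
    hf (by rwa [Finset.mem_coe, mem_support_iff, coeff_sub, coeff_monomial, if_neg hne.symm,
      sub_zero, ← mem_support_iff])
  have hβ : β ∈ f.support := by simpa [hcoeff] using hc
  have hfilter : f.support.filter (fun a => ∀ b ∈ f.support, ¬ rvGT b a) = {β} := by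
    ext α
    simp only [Finset.mem_filter, Finset.mem_singleton, rvGT_iff_toColex_lt, not_lt]
    constructor
    · rintro ⟨hα, hmin⟩
      by_contra hne
      exact (hmin β hβ).not_gt (hsupp α hα hne)
    · rintro rfl
      refine ⟨hβ, fun b hb => ?_⟩
      rcases eq_or_ne b α with rfl | hne
      · exact le_rfl
      · exact (hsupp b hb hne).le
  rw [iniT, hfilter, Finset.sum_singleton, hcoeff]

end Revlex

section Shear

variable {k : Type*} [Field k] {n : ℕ}

noncomputable def shearHom (a : Fin n → k) :
    MvPolynomial (Fin (n + 1)) k →ₐ[k] MvPolynomial (Fin (n + 1)) k :=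
  aeval (Fin.lastCases (X (Fin.last n)) fun i => X i.castSucc - C (a i) * X (Fin.last n))

@[simp]
theorem shearHom_X_last (a : Fin n → k) : shearHom a (X (Fin.last n)) = X (Fin.last n) := by
  simp [shearHom]

@[simp]
theorem shearHom_X_castSucc (a : Fin n → k) (i : Fin n) :
    shearHom a (X i.castSucc) = X i.castSucc - C (a i) * X (Fin.last n) := by
  simp [shearHom]

theorem shearHom_comp_neg (a : Fin n → k) :
    (shearHom a).comp (shearHom (-a)) = AlgHom.id k _ := by
  refine algHom_ext fun i => ?_
  induction i using Fin.lastCases with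
  | last => simp
  | cast i => simp

noncomputable def shear (a : Fin n → k) :
    MvPolynomial (Fin (n + 1)) k ≃ₐ[k] MvPolynomial (Fin (n + 1)) k :=
  AlgEquiv.ofAlgHom (shearHom a) (shearHom (-a)) (shearHom_comp_neg a)
    (by simpa using shearHom_comp_neg (-a))

@[simp]
theorem shear_apply (a : Fin n → k) (f : MvPolynomial (Fin (n + 1)) k) :
    shear a f = shearHom a f := rfl

theorem shear_sub_mem_span_X_last (a : Fin n → k) (f : MvPolynomial (Fin (n + 1)) k) :
    shear a f - f ∈ Ideal.span {X (Fin.last n)} := by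
  set I : Ideal (MvPolynomial (Fin (n + 1)) k) := Ideal.span {X (Fin.last n)}
  have hX : X (Fin.last n) ∈ I := Ideal.subset_span rfl
  have hmod : (Ideal.Quotient.mkₐ k I).comp (shearHom a) = Ideal.Quotient.mkₐ k I := by
    refine algHom_ext fun i => ?_
    induction i using Fin.lastCases with
    | last => simp
    | cast i =>
      simp only [AlgHom.comp_apply, shearHom_X_castSucc, Ideal.Quotient.mkₐ_eq_mk,
        Ideal.Quotient.mk_eq_mk_iff_sub_mem]
      simpa using I.mul_mem_left (C (a i)) hX
  rw [← Ideal.Quotient.mk_eq_mk_iff_sub_mem]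
  exact congr($hmod f)

theorem shear_monomial_sub_mem (a : Fin n → k) (γ : Fin (n + 1) →₀ ℕ) :
    shear a (monomial γ 1) - monomial γ 1 ∈
      Ideal.span {X (Fin.last n) ^ (γ (Fin.last n) + 1)} := by
  have hsplit : (monomial γ 1 : MvPolynomial (Fin (n + 1)) k) =
      X (Fin.last n) ^ γ (Fin.last n) * monomial (γ.erase (Fin.last n)) 1 := by
    rw [X_pow_eq_monomial, monomial_mul, one_mul, Finsupp.single_add_erase]
  rw [hsplit, map_mul, map_pow, shear_apply, shearHom_X_last, ← mul_sub, pow_succ,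
    Ideal.mem_span_singleton]
  exact mul_dvd_mul_left _ (Ideal.mem_span_singleton.1 (shear_sub_mem_span_X_last a _))

theorem last_lt_of_mem_support_shear_monomial_sub (a : Fin n → k) {γ α : Fin (n + 1) →₀ ℕ}
    (hα : α ∈ (shear a (monomial γ 1) - monomial γ 1).support) :
    γ (Fin.last n) < α (Fin.last n) := by
  have hmem : shear a (monomial γ 1) - monomial γ 1 ∈
      Ideal.span ((fun s => monomial s (1 : k)) ''
        {Finsupp.single (Fin.last n) (γ (Fin.last n) + 1)}) := by
    simpa [X_pow_eq_monomial] using shear_monomial_sub_mem a γ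
  rw [mem_ideal_span_monomial_image] at hmem
  obtain ⟨s, rfl, hs⟩ := hmem α hα
  exact Finsupp.single_le_iff.1 hs

theorem toColex_lt_of_last_lt {γ α : Fin (n + 1) →₀ ℕ} (h : γ (Fin.last n) < α (Fin.last n)) :
    toColex γ < toColex α :=
  Finsupp.Colex.lt_iff.2 ⟨Fin.last n, fun j hj => absurd hj (Fin.le_last j).not_gt, h⟩

theorem shear_sub_monomial_mem (a : Fin n → k) {g : MvPolynomial (Fin (n + 1)) k}
    {β : Fin (n + 1) →₀ ℕ} (hβ : ∀ γ ∈ g.support, toColex β ≤ toColex γ) :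
    shear a g - monomial β (coeff β g) ∈ restrictSupport k {α | toColex β < toColex α} := by
  have hshear : shear a g - g =
      ∑ γ ∈ g.support, coeff γ g • (shear a (monomial γ 1) - monomial γ 1) := by
    simp_rw [smul_sub, Finset.sum_sub_distrib, ← map_smul, ← map_sum, smul_eq_mul,
      mul_one, ← as_sum]
  rw [show shear a g - monomial β (coeff β g) = (g - monomial β (coeff β g)) + (shear a g - g)
    by abel, hshear]
  refine add_mem ?_ (Submodule.sum_mem _ fun γ hγ => Submodule.smul_mem _ _ ?_)
  · rw [mem_restrictSupport_iff]
    intro α hα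
    rw [Finset.mem_coe, mem_support_iff, coeff_sub, coeff_monomial] at hα
    have hne : β ≠ α := fun h => hα (by rw [if_pos h, h, sub_self])
    rw [if_neg hne, sub_zero, ← mem_support_iff] at hα
    exact (hβ α hα).lt_of_ne (toColex_inj.not.2 hne)
  · rw [mem_restrictSupport_iff]
    intro α hα
    exact (hβ γ hγ).trans_lt
      (toColex_lt_of_last_lt (last_lt_of_mem_support_shear_monomial_sub a hα))

theorem iniT_shear (a : Fin n → k) {g : MvPolynomial (Fin (n + 1)) k} {β : Fin (n + 1) →₀ ℕ}
    (hβg : β ∈ g.support) (hβ : ∀ γ ∈ g.support, toColex β ≤ toColex γ) :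
    iniT (shear a g) = monomial β (coeff β g) :=
  iniT_eq_monomial_of_sub_mem (mem_support_iff.1 hβg) (shear_sub_monomial_mem a hβ)

end Shear

section InitialIdeal

variable (k : Type*) [Field k] (n : ℕ)

noncomputable def firstVarsIdeal : Ideal (MvPolynomial (Fin (n + 1)) k) :=
  Ideal.span {g | ∃ i : Fin n, g = X i.castSucc}

def degExceptLast (γ : Fin (n + 1) →₀ ℕ) : ℕ := ∑ i : Fin n, γ i.castSucc

variable {k n}

theorem degExceptLast_add (γ δ : Fin (n + 1) →₀ ℕ) :
    degExceptLast n (γ + δ) = degExceptLast n γ + degExceptLast n δ := by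
  simp [degExceptLast, Finset.sum_add_distrib]

theorem degExceptLast_single (i : Fin n) :
    degExceptLast n (Finsupp.single i.castSucc 1) = 1 := by
  simp [degExceptLast, Finsupp.single_apply]

theorem monomial_mem_firstVarsIdeal_pow {m : ℕ} {γ : Fin (n + 1) →₀ ℕ}
    (hγ : m ≤ degExceptLast n γ) : monomial γ (1 : k) ∈ firstVarsIdeal k n ^ m := by
  rw [monomial_eq, C_1, one_mul, Finsupp.prod_fintype _ _ (fun _ => pow_zero _),
    Fin.prod_univ_castSucc]
  refine Ideal.mul_mem_right _ _ (Ideal.pow_le_pow_right hγ ?_)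
  rw [degExceptLast, ← Finset.prod_pow_eq_pow_sum]
  have hX (i : Fin n) : X i.castSucc ∈ firstVarsIdeal k n := Ideal.subset_span ⟨i, rfl⟩
  exact Ideal.prod_mem_prod fun i _ => Ideal.pow_mem_pow (hX i) _

theorem firstVarsIdeal_pow (m : ℕ) :
    firstVarsIdeal k n ^ m =
      Ideal.span ((fun γ => monomial γ (1 : k)) '' {γ | m ≤ degExceptLast n γ}) := by
  refine le_antisymm ?_ (Ideal.span_le.2 ?_)
  · induction m with
    | zero =>
      rw [pow_zero, Ideal.one_eq_top, top_le_iff, Ideal.eq_top_iff_one]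
      exact Ideal.subset_span ⟨0, Nat.zero_le _, rfl⟩
    | succ m ih =>
      have hvars : firstVarsIdeal k n ≤
          Ideal.span ((fun γ => monomial γ (1 : k)) '' {γ | 1 ≤ degExceptLast n γ}) := by
        refine Ideal.span_le.2 ?_
        rintro _ ⟨i, rfl⟩
        exact Ideal.subset_span ⟨_, (degExceptLast_single i).ge, rfl⟩
      refine (Ideal.mul_mono ih hvars).trans ?_
      rw [Ideal.span_mul_span', Ideal.span_le]
      rintro _ ⟨_, ⟨γ, hγ, rfl⟩, _, ⟨δ, hδ, rfl⟩, rfl⟩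
      refine Ideal.subset_span ⟨γ + δ, ?_, by simp⟩
      simp only [Set.mem_ofPred_eq, degExceptLast_add] at hγ hδ ⊢
      omega
  · rintro _ ⟨γ, hγ, rfl⟩
    exact monomial_mem_firstVarsIdeal_pow hγ

theorem iniIdeal_map_shear_pow (a : Fin n → k) (m : ℕ) :
    iniIdeal (Ideal.map (shear a) (firstVarsIdeal k n) ^ m) = firstVarsIdeal k n ^ m := by
  classical
  rw [← Ideal.map_pow, firstVarsIdeal_pow]
  refine le_antisymm (Ideal.span_le.2 ?_) (Ideal.span_le.2 ?_)
  · rintro _ ⟨_, hf, rfl⟩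
    obtain ⟨g, hg, rfl⟩ := (Ideal.mem_map_of_equiv _ _).1 hf
    obtain rfl | hg0 := eq_or_ne g 0
    · simp [iniT]
    obtain ⟨β, hβg, hβ⟩ := g.support.exists_min_image toColex (support_nonempty.2 hg0)
    rw [SetLike.mem_coe, iniT_shear a hβg hβ, mem_ideal_span_monomial_image]
    intro α hα
    rw [support_monomial, if_neg (mem_support_iff.1 hβg), Finset.mem_singleton] at hα
    exact hα ▸ mem_ideal_span_monomial_image.1 hg β hβg
  · rintro _ ⟨γ, hγ, rfl⟩
    have hini : iniT (shear a (monomial γ 1)) = monomial γ (1 : k) := by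
      simpa using iniT_shear a (g := monomial γ (1 : k)) (β := γ) (by simp) (by simp)
    change monomial γ (1 : k) ∈ _
    rw [← hini]
    exact Ideal.subset_span ⟨_, Ideal.mem_map_of_mem _ (Ideal.subset_span ⟨γ, hγ, rfl⟩), rfl⟩

end InitialIdeal

section Geometry

variable {k : Type*} [Field k]

theorem smul_mem_zeroLocus_of_homogeneous {σ : Type*} {q : Ideal (MvPolynomial σ k)}
    (hhom : ∃ G : Set (MvPolynomial σ k),
      (∀ g ∈ G, ∃ e : ℕ, g.IsHomogeneous e) ∧ q = Ideal.span G)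
    {z : σ → k} (hz : z ∈ zeroLocus k q) (t : k) : t • z ∈ zeroLocus k q := by
  obtain ⟨G, hG, rfl⟩ := hhom
  intro f hf
  refine (mem_vanishingIdeal_singleton_iff _ f).1 (Ideal.span_le.2 (fun g hg => ?_) hf)
  obtain ⟨e, hge⟩ := hG g hg
  rw [SetLike.mem_coe, mem_vanishingIdeal_singleton_iff, aeval_eq_eval, hge.eval_smul]
  exact mul_eq_zero_of_right _ (hz g (Ideal.subset_span hg))

theorem exists_mem_zeroLocus_ne_zero [IsAlgClosed k] {σ : Type*} [Finite σ]
    {q : Ideal (MvPolynomial σ k)} [q.IsPrime] {i : σ} (hi : X i ∉ q) :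
    ∃ z ∈ zeroLocus k q, z i ≠ 0 := by
  by_contra! h
  refine hi ?_
  rw [← IsPrime.vanishingIdeal_zeroLocus (K := k) q]
  intro z hz
  simpa using h z hz

variable {n : ℕ}

instance firstVarsIdeal_isPrime : (firstVarsIdeal k n).IsPrime := by
  have h : firstVarsIdeal k n = Ideal.span (X '' Set.range Fin.castSucc) := by
    rw [firstVarsIdeal, ← Set.range_comp]
    congr 1
    ext g
    simp [eq_comm]
  rw [h]
  exact isPrime_span_X_image _

theorem mem_zeroLocus_map_shear_iff (a : Fin n → k) (x : Fin (n + 1) → k) :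
    x ∈ zeroLocus k (Ideal.map (shear a) (firstVarsIdeal k n)) ↔
      ∀ i, x i.castSucc = a i * x (Fin.last n) := by
  rw [firstVarsIdeal, Ideal.map_span]
  constructor
  · intro hx i
    have := hx _ (Ideal.subset_span ⟨X i.castSucc, ⟨i, rfl⟩, rfl⟩)
    simp only [shear_apply, shearHom_X_castSucc, map_sub, map_mul, aeval_X, aeval_C,
      Algebra.algebraMap_self, RingHom.id_apply] at this
    exact sub_eq_zero.1 this
  · intro hx f hf
    refine (mem_vanishingIdeal_singleton_iff x f).1 (Ideal.span_le.2 ?_ hf)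
    rintro _ ⟨_, ⟨i, rfl⟩, rfl⟩
    simp [hx i]

theorem le_map_shear_of_mem_zeroLocus [IsAlgClosed k]
    {q : Ideal (MvPolynomial (Fin (n + 1)) k)}
    (hhom : ∃ G : Set (MvPolynomial (Fin (n + 1)) k),
      (∀ g ∈ G, ∃ e : ℕ, g.IsHomogeneous e) ∧ q = Ideal.span G)
    {z : Fin (n + 1) → k} (hzq : z ∈ zeroLocus k q) (hz : z (Fin.last n) ≠ 0) :
    q ≤ Ideal.map (shear fun i => z i.castSucc / z (Fin.last n)) (firstVarsIdeal k n) := by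
  set p := Ideal.map (shear fun i => z i.castSucc / z (Fin.last n)) (firstVarsIdeal k n)
  have : p.IsPrime := Ideal.map_isPrime_of_equiv _
  have hVpq : zeroLocus k p ⊆ zeroLocus k q := by
    intro x hx
    have hline : x = (x (Fin.last n) / z (Fin.last n)) • z := by
      funext i
      induction i using Fin.lastCases with
      | last => simp [div_mul_cancel₀ _ hz]
      | cast i =>
        rw [(mem_zeroLocus_map_shear_iff _ x).1 hx i, Pi.smul_apply, smul_eq_mul]
        field_simp
    rw [hline]
    exact smul_mem_zeroLocus_of_homogeneous hhom hzq _
  calc q ≤ vanishingIdeal k (zeroLocus k q) := le_vanishingIdeal_zeroLocus q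
    _ ≤ vanishingIdeal k (zeroLocus k p) := vanishingIdeal_anti_mono hVpq
    _ = p := IsPrime.vanishingIdeal_zeroLocus p

theorem map_shear_lt_vanishingIdeal_zero (a : Fin n → k) :
    Ideal.map (shear a) (firstVarsIdeal k n) < vanishingIdeal k {(0 : Fin (n + 1) → k)} := by
  refine SetLike.lt_iff_le_and_exists.2 ⟨fun f hf => ?_, X (Fin.last n), by simp, fun h => ?_⟩
  · exact (mem_vanishingIdeal_singleton_iff 0 f).2
      ((mem_zeroLocus_map_shear_iff a 0).2 (by simp) f hf)
  · have := (mem_zeroLocus_map_shear_iff a (Fin.lastCases 1 a)).2 (by simp) _ h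
    simp at this

theorem exists_eq_map_shear [IsAlgClosed k] {q : Ideal (MvPolynomial (Fin (n + 1)) k)}
    (hq : q.IsPrime)
    (hhom : ∃ G : Set (MvPolynomial (Fin (n + 1)) k),
      (∀ g ∈ G, ∃ e : ℕ, g.IsHomogeneous e) ∧ q = Ideal.span G)
    (hht : htIdeal q = n) (hx : X (Fin.last n) ∉ q) :
    ∃ a : Fin n → k, q = Ideal.map (shear a) (firstVarsIdeal k n) := by
  have := hq
  obtain ⟨z, hzq, hz⟩ := exists_mem_zeroLocus_ne_zero hx
  set a : Fin n → k := fun i => z i.castSucc / z (Fin.last n)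
  have hqp := le_map_shear_of_mem_zeroLocus hhom hzq hz
  have hpP := map_shear_lt_vanishingIdeal_zero a
  have hheight : (n : ℕ∞) ≤ Order.height (⟨q, hq⟩ : PrimeSpectrum _) :=
    hht.symm.trans_le (iInf₂_le (⟨q, hq⟩ : PrimeSpectrum _) (le_refl q))
  have key : (⟨q, hq⟩ : PrimeSpectrum _) = ⟨_, Ideal.map_isPrime_of_equiv (shear a)⟩ :=
    eq_of_le_of_lt_of_le_height (ringKrullDim_mvPolynomial_fin k (n + 1)).le
      (P := ⟨vanishingIdeal k {0}, inferInstance⟩) hqp hpP hheight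
  exact ⟨a, congrArg PrimeSpectrum.asIdeal key⟩

end Geometry

end RevlexInitialIdeal

theorem stmt12_general (k : Type*) [Field k] [IsAlgClosed k] (n : ℕ)
    (q : Ideal (MvPolynomial (Fin (n + 1)) k)) (hq : q.IsPrime)
    (hhom : ∃ G : Set (MvPolynomial (Fin (n + 1)) k),
      (∀ g ∈ G, ∃ e : ℕ, g.IsHomogeneous e) ∧ q = Ideal.span G)
    (hht : htIdeal q = n)
    (hx : X (Fin.last n) ∉ q)
    (m : ℕ) :
    iniIdeal (q ^ m) =
      (Ideal.span {g : MvPolynomial (Fin (n + 1)) k | ∃ i : Fin n, g = X i.castSucc}) ^ m := by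
  obtain ⟨a, rfl⟩ := RevlexInitialIdeal.exists_eq_map_shear hq hhom hht hx
  exact RevlexInitialIdeal.iniIdeal_map_shear_pow a m

/-- over an algebraically closed field, if `q ⊆ k[x_1,…,x_{n+1}]`
is a homogeneous prime of height `n` with `x_{n+1} ∉ q`, then for all `m > 0`
the reverse-lexicographic initial ideal of `q^m` is `(x_1,…,x_n)^m`. -/
theorem stmt12 (k : Type*) [Field k] [IsAlgClosed k] (n : ℕ)
    (q : Ideal (MvPolynomial (Fin (n + 1)) k)) (hq : q.IsPrime)
    (hhom : ∃ G : Set (MvPolynomial (Fin (n + 1)) k),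
      (∀ g ∈ G, ∃ e : ℕ, g.IsHomogeneous e) ∧ q = Ideal.span G)
    (hht : htIdeal q = n)
    (hx : X (Fin.last n) ∉ q)
    (m : ℕ) (hm : 0 < m) :
    iniIdeal (q ^ m) =
      (Ideal.span {g : MvPolynomial (Fin (n + 1)) k | ∃ i : Fin n, g = X i.castSucc}) ^ m :=
  stmt12_general k n q hq hhom hht hx m
end

section
/- Let k be a field of characteristic p > 0, t ∈ k an element with no p-th root in k, R = k[x,y], and I = (x^p + t y^p). Then I is integrally closed, and there is no k-linear change of coordinates γ ∈ GL_2(k) such that γ(I) is a monomial ideal. -/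
open MvPolynomial

/-! If `r` is integral over a principal ideal `(f)` with `f ≠ 0`, then `r / f` is integral over
the ring, so in a normal domain such as `k[x, y]` every nonzero principal ideal is integrally closed.

In characteristic `p` a linear substitution `γ` sends `x ^ p + t y ^ p` to `a x ^ p + b y ^ p`,
where `a` and `b` are the values of `u ^ p + t v ^ p` on the columns of `γ`; this form has no
nontrivial zero since `t` is not a `p`-th power, so `a, b ≠ 0`. A monomial ideal containing
`a x ^ p + b y ^ p` contains a monomial dividing `x ^ p`, i.e. a power of `x`, and a power of `x`
is not divisible by `a x ^ p + b y ^ p`. -/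

/-- The integral closure of an ideal `I`: elements `r` satisfying an equation
`r^n + a_1 r^{n-1} + ⋯ + a_n = 0` with `a_i ∈ I^i`. -/
def icl {R : Type*} [CommRing R] (I : Ideal R) : Set R :=
  {r | ∃ n : ℕ, 0 < n ∧ ∃ a : ℕ → R, (∀ i, a i ∈ I ^ i) ∧
    r ^ n + ∑ i ∈ Finset.range n, a (i + 1) * r ^ (n - (i + 1)) = 0}

section IntegralClosureOfIdeals

variable {R : Type*} [CommRing R]

theorem subset_icl (I : Ideal R) : (I : Set R) ⊆ icl I := by
  intro r hr
  refine ⟨1, one_pos, fun i => if i = 1 then -r else 0, fun i => ?_, by simp⟩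
  dsimp only
  split_ifs with h
  · simpa [h] using neg_mem hr
  · exact zero_mem _

theorem isIntegral_div_of_mem_icl_span_singleton {K : Type*} [Field K] [Algebra R K] {f r : R}
    (hf : algebraMap R K f ≠ 0) (hr : r ∈ icl (Ideal.span {f})) :
    IsIntegral R (algebraMap R K r / algebraMap R K f) := by
  obtain ⟨n, -, a, ha, hrel⟩ := hr
  choose c hc using fun i =>
    Ideal.mem_span_singleton.mp ((Ideal.span_singleton_pow f i).le (ha i))
  set φ := algebraMap R K
  set z := φ r / φ f
  have hrz : φ r = φ f * z := (mul_div_cancel₀ _ hf).symm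
  refine ⟨Polynomial.X ^ n + ∑ i ∈ Finset.range n,
      Polynomial.C (c (i + 1)) * Polynomial.X ^ (n - (i + 1)), ?_, ?_⟩
  · refine Polynomial.monic_X_pow_add ((Polynomial.degree_sum_le _ _).trans_lt ?_)
    refine (Finset.sup_lt_iff (WithBot.bot_lt_coe n)).mpr fun i hi => ?_
    refine (Polynomial.degree_C_mul_X_pow_le _ _).trans_lt ?_
    exact WithBot.coe_lt_coe.mpr (Nat.sub_lt_self i.succ_pos (Finset.mem_range.mp hi))
  · -- clearing the denominator `φ f ^ n` turns the equation for `z` into the one for `r`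
    have hscaled : φ f ^ n * (z ^ n + ∑ i ∈ Finset.range n, φ (c (i + 1)) * z ^ (n - (i + 1))) =
        φ (r ^ n + ∑ i ∈ Finset.range n, a (i + 1) * r ^ (n - (i + 1))) := by
      rw [mul_add, Finset.mul_sum, map_add, map_sum, map_pow, hrz, mul_pow]
      congr 1
      refine Finset.sum_congr rfl fun i hi => ?_
      rw [← pow_mul_pow_sub (φ f) (show i + 1 ≤ n from Finset.mem_range.mp hi), hc]
      simp only [map_mul, map_pow, hrz]
      ring
    rw [hrel, map_zero] at hscaled
    simpa [Polynomial.eval₂_finsetSum, pow_ne_zero n hf] using hscaled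

theorem icl_span_singleton [IsDomain R] [IsIntegrallyClosed R] {f : R} (hf : f ≠ 0) :
    icl (Ideal.span {f}) = Ideal.span {f} := by
  refine Set.Subset.antisymm (fun r hr => ?_) (subset_icl _)
  have hf' : algebraMap R (FractionRing R) f ≠ 0 :=
    (IsFractionRing.injective R (FractionRing R)).ne_iff' (map_zero _) |>.mpr hf
  obtain ⟨s, hs⟩ := IsIntegrallyClosed.isIntegral_iff.mp
    (isIntegral_div_of_mem_icl_span_singleton hf' hr)
  rw [eq_div_iff hf', ← map_mul] at hs
  exact Ideal.mem_span_singleton'.mpr ⟨s, IsFractionRing.injective R (FractionRing R) hs⟩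

end IntegralClosureOfIdeals

theorem eq_zero_of_pow_add_mul_pow_eq_zero {k : Type*} [Field k] {p : ℕ} [Fact p.Prime]
    [CharP k p] {t : k} (ht : ∀ c : k, c ^ p ≠ t) {u v : k} (h : u ^ p + t * v ^ p = 0) :
    u = 0 ∧ v = 0 := by
  have hp := (Fact.out : p.Prime).ne_zero
  obtain rfl | hv := eq_or_ne v 0
  · simpa [hp] using h
  · refine absurd ?_ (ht (-u / v))
    rw [div_pow, neg_pow, neg_one_pow_char k p, div_eq_iff (pow_ne_zero p hv)]
    linear_combination -h

section Polynomials

variable {R : Type*} [CommRing R]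

theorem aeval_linear_X_pow_add_C_mul_X_pow (p : ℕ) [Fact p.Prime] [CharP R p]
    (M : Matrix (Fin 2) (Fin 2) R) (t : R) :
    aeval (fun i : Fin 2 => ∑ j : Fin 2, C (M i j) * X j) (X 0 ^ p + C t * X 1 ^ p) =
      (C (M 0 0 ^ p + t * M 1 0 ^ p) * X 0 ^ p + C (M 0 1 ^ p + t * M 1 1 ^ p) * X 1 ^ p :
        MvPolynomial (Fin 2) R) := by
  simp only [map_add, map_mul, map_pow, aeval_X, aeval_C, algebraMap_eq, Fin.sum_univ_two,
    add_pow_char]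
  simp only [mul_pow, ← C_pow]
  ring

theorem X_pow_add_C_mul_X_pow_ne_zero [Nontrivial R] {p : ℕ} (hp : 0 < p) (t : R) :
    (X 0 ^ p + C t * X 1 ^ p : MvPolynomial (Fin 2) R) ≠ 0 := by
  intro h
  simpa [hp.ne'] using congrArg (aeval (R := R) ![(1 : R), 0]) h

theorem C_mul_X_pow_add_C_mul_X_pow_not_dvd_X_pow [IsDomain R] {p : ℕ} (hp : 0 < p) (a : R)
    {b : R} (hb : b ≠ 0) (m : ℕ) :
    ¬ (C a * X 0 ^ p + C b * X 1 ^ p : MvPolynomial (Fin 2) R) ∣ X 0 ^ m := by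
  -- dehomogenize at `x = 1`: the image of `X 0 ^ m` is a unit, that of the form has degree `p`
  intro hdvd
  have hunit : IsUnit (Polynomial.C a + Polynomial.C b * Polynomial.X ^ p) := by
    refine isUnit_of_dvd_one ?_
    simpa [Polynomial.algebraMap_eq] using map_dvd (aeval ![(1 : Polynomial R), Polynomial.X]) hdvd
  have := Polynomial.natDegree_eq_zero_of_isUnit hunit
  rw [Polynomial.natDegree_C_add, Polynomial.natDegree_C_mul_X_pow p b hb] at this
  exact hp.ne' this

theorem span_C_mul_X_pow_add_C_mul_X_pow_ne_span_monomial [IsDomain R] {p : ℕ} (hp : 0 < p)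
    {a b : R} (ha : a ≠ 0) (hb : b ≠ 0) (A : Set (Fin 2 →₀ ℕ)) :
    Ideal.span {(C a * X 0 ^ p + C b * X 1 ^ p : MvPolynomial (Fin 2) R)} ≠
      Ideal.span ((fun e => monomial e (1 : R)) '' A) := by
  intro hA
  have hsupp : Finsupp.single 0 p ∈
      (C a * X 0 ^ p + C b * X 1 ^ p : MvPolynomial (Fin 2) R).support := by
    simp [coeff_X_pow, Finsupp.single_eq_single_iff, hp.ne', ha]
  obtain ⟨e, heA, hle⟩ := mem_ideal_span_monomial_image.mp
    (hA ▸ Ideal.mem_span_singleton_self _) _ hsupp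
  obtain ⟨m, rfl⟩ := Finsupp.support_subset_singleton'.mp
    ((Finsupp.support_mono hle).trans Finsupp.support_single_subset)
  refine C_mul_X_pow_add_C_mul_X_pow_not_dvd_X_pow hp a hb m (Ideal.mem_span_singleton.mp ?_)
  rw [hA, X_pow_eq_monomial]
  exact Ideal.subset_span ⟨_, heA, rfl⟩

end Polynomials

/-- in `k[x,y]` with `char k = p` and `t ∈ k` with no `p`-th root,
the ideal `I = (x^p + t y^p)` is integrally closed, and no invertible `k`-linear
change of coordinates turns `I` into a monomial ideal. -/
theorem stmt14 (k : Type*) [Field k] (p : ℕ) (hp : p.Prime) [CharP k p]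
    (t : k) (ht : ∀ c : k, c ^ p ≠ t) :
    icl (Ideal.span {(X 0 : MvPolynomial (Fin 2) k) ^ p + C t * X 1 ^ p}) =
        ((Ideal.span {(X 0 : MvPolynomial (Fin 2) k) ^ p + C t * X 1 ^ p} : Ideal _) : Set _) ∧
      ¬ ∃ M : Matrix (Fin 2) (Fin 2) k, IsUnit M.det ∧
        ∃ A : Set (Fin 2 →₀ ℕ),
          Ideal.map
              (aeval (fun i : Fin 2 => ∑ jj : Fin 2, C (M i jj) * X jj) :
                MvPolynomial (Fin 2) k →ₐ[k] MvPolynomial (Fin 2) k)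
              (Ideal.span {(X 0 : MvPolynomial (Fin 2) k) ^ p + C t * X 1 ^ p}) =
            Ideal.span ((fun e => monomial e (1 : k)) '' A) := by
  have : Fact p.Prime := ⟨hp⟩
  refine ⟨icl_span_singleton (X_pow_add_C_mul_X_pow_ne_zero hp.pos t), ?_⟩
  rintro ⟨M, hM, A, hA⟩
  rw [Ideal.map_span, Set.image_singleton, aeval_linear_X_pow_add_C_mul_X_pow] at hA
  have hcoeff : ∀ j, M 0 j ^ p + t * M 1 j ^ p ≠ 0 := fun j h => by
    obtain ⟨h0, h1⟩ := eq_zero_of_pow_add_mul_pow_eq_zero ht h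
    exact hM.ne_zero (Matrix.det_eq_zero_of_column_eq_zero j (Fin.forall_fin_two.mpr ⟨h0, h1⟩))
  exact span_C_mul_X_pow_add_C_mul_X_pow_ne_span_monomial hp.pos (hcoeff 0) (hcoeff 1) A hA
end

section
/- Let L be a field, let x_{i,j} (1 ≤ i ≤ r, 1 ≤ j ≤ a_i) and y_1,...,y_s be variables, S the polynomial ring in all of them, and e_1 < ... < e_r positive integers. Let D be the integral closure of the ideal generated by all x_{i,j}^{e_i}. If γ ∈ GL over L fixes the flag 0 ⊆ span(x_{1,*}) ⊆ span(x_{1,*}, x_{2,*}) ⊆ ... ⊆ span(x_{1,*},...,x_{r,*}), then γD = D. -/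
/-!
Give `x_{i,j}` the weight `E / e_i`, where `E = ∏ e_i`, and `y_k` the weight `0`. The integral
closure of `I = (x_{i,j} ^ e_i)` consists of the polynomials all of whose monomials have weight at
least `E`. Such a monomial `m` has `m ^ E ∈ I ^ E`, so `m t` is integral over the Rees algebra
`R[I t]`, and so is any sum of such terms. Conversely, the substitution `x_v ↦ t ^ w_v x_v` turns an
integral equation over `I` into one over `(t ^ E)`, which is integrally closed in a polynomial ring
over a domain, as trailing degrees show.

An automorphism preserving the flag sends `x_{i,j}` to a combination of variables of weight at
least `E / e_i`, hence `x_{i,j} ^ e_i` into weight at least `E`, so it maps the integral closure of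
`I` into itself. The flag consists of finite-dimensional spaces, so the inverse preserves it too.
-/

open MvPolynomial

section IntegralClosureOfIdeal

variable {R S : Type*} [CommRing R] [CommRing S]

theorem icl_mono {I J : Ideal R} (h : I ≤ J) : icl I ⊆ icl J := by
  rintro f ⟨n, hn, a, ha, heq⟩
  exact ⟨n, hn, a, fun i => Ideal.pow_right_mono h i (ha i), heq⟩

theorem image_icl_subset_icl_map {F : Type*} [FunLike F R S] [RingHomClass F R S] (φ : F)
    (I : Ideal R) : φ '' icl I ⊆ icl (I.map φ) := by
  rintro _ ⟨f, ⟨n, hn, a, ha, heq⟩, rfl⟩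
  refine ⟨n, hn, fun i => φ (a i), fun i => ?_, ?_⟩
  · rw [← Ideal.map_pow]
    exact Ideal.mem_map_of_mem φ (ha i)
  · simpa only [map_add, map_pow, map_sum, map_mul, map_zero] using congrArg φ heq

theorem mem_icl_of_isIntegral_monomial_one [Nontrivial R] {I : Ideal R} {f : R}
    (h : IsIntegral (reesAlgebra I) (Polynomial.monomial 1 f)) : f ∈ icl I := by
  obtain ⟨p, hp, hev⟩ := h
  set n := p.natDegree with hn
  have hlead : (p.coeff n : Polynomial R) = 1 := by rw [hn, hp.coeff_natDegree]; rfl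
  rw [Polynomial.eval₂_eq_sum_range, ← hn] at hev
  -- the coefficient of `X ^ n` in `p (f X) = 0`, read from the top
  set a : ℕ → R := fun j => (p.coeff (n - j) : Polynomial R).coeff j
  have hsum : ∑ j ∈ Finset.range (n + 1), a j * f ^ (n - j) = 0 := by
    have h := congrArg (Polynomial.coeff · n) hev
    simp only [Polynomial.finsetSum_coeff, Polynomial.coeff_zero] at h
    rw [← Finset.sum_range_reflect] at h
    rw [← h]
    refine Finset.sum_congr rfl fun j hj => ?_
    have hj : j ≤ n := Nat.lt_succ_iff.1 (Finset.mem_range.1 hj)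
    rw [Nat.add_sub_cancel, Polynomial.monomial_pow, one_mul,
      ← Polynomial.C_mul_X_pow_eq_monomial, ← mul_assoc, Polynomial.coeff_mul_X_pow',
      if_pos (Nat.sub_le n j), Polynomial.coeff_mul_C, Nat.sub_sub_self hj]
    rfl
  have hnpos : 0 < n := by
    refine Nat.pos_of_ne_zero fun h0 => one_ne_zero (α := Polynomial R) ?_
    rw [← hev, h0, Finset.sum_range_one, pow_zero, mul_one, ← h0]
    exact hlead.symm
  refine ⟨n, hnpos, a, fun j => (p.coeff (n - j)).2 j, ?_⟩
  rwa [Finset.sum_range_succ', Nat.sub_zero, show a 0 = 1 by simp [a, hlead], one_mul,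
    add_comm] at hsum

theorem isIntegral_monomial_one_of_pow_mem_pow {I : Ideal R} {f : R} {n : ℕ} (hn : 0 < n)
    (hf : f ^ n ∈ I ^ n) : IsIntegral (reesAlgebra I) (Polynomial.monomial 1 f) := by
  have hmem : Polynomial.monomial 1 f ^ n ∈ reesAlgebra I := by
    rw [Polynomial.monomial_pow, one_mul]
    exact reesAlgebra.monomial_mem.2 hf
  exact IsIntegral.of_pow hn (isIntegral_algebraMap (x := (⟨_, hmem⟩ : reesAlgebra I)))

theorem sum_mem_icl_of_pow_mem_pow [Nontrivial R] {I : Ideal R} {ι : Type*} (s : Finset ι)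
    (f : ι → R) {n : ℕ} (hn : 0 < n) (hf : ∀ k ∈ s, f k ^ n ∈ I ^ n) :
    ∑ k ∈ s, f k ∈ icl I := by
  apply mem_icl_of_isIntegral_monomial_one
  rw [map_sum]
  exact IsIntegral.sum _ fun k hk => isIntegral_monomial_one_of_pow_mem_pow hn (hf k hk)

end IntegralClosureOfIdeal

namespace Polynomial

variable {S : Type*} [CommRing S] [IsDomain S]

theorem natTrailingDegree_pow {g : S[X]} (hg : g ≠ 0) (n : ℕ) :
    (g ^ n).natTrailingDegree = n * g.natTrailingDegree := by
  induction n with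
  | zero => simp
  | succ n ih => rw [pow_succ, natTrailingDegree_mul (pow_ne_zero _ hg) hg, ih, add_one_mul]

/-- Trailing degrees: in an integral equation of `g` over `(X ^ E)`, the term `g ^ n` would be
the only one without a factor `X ^ (n * k + 1)`, `k < E` the trailing degree of `g`. -/
theorem X_pow_dvd_of_mem_icl {g : S[X]} {E : ℕ} (hg : g ∈ icl (Ideal.span {(X : S[X]) ^ E})) :
    (X : S[X]) ^ E ∣ g := by
  obtain ⟨n, -, b, hb, heq⟩ := hg
  rcases eq_or_ne g 0 with rfl | hg0
  · exact dvd_zero _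
  set k := g.natTrailingDegree
  have hXk : (X : S[X]) ^ k ∣ g :=
    X_pow_dvd_iff.2 fun d hd => coeff_eq_zero_of_lt_natTrailingDegree hd
  by_contra hnd
  have hkE : k + 1 ≤ E := by
    by_contra! hEk
    exact hnd ((pow_dvd_pow X (by omega)).trans hXk)
  have hlow : ∀ i ∈ Finset.range n,
      (X : S[X]) ^ (n * k + 1) ∣ b (i + 1) * g ^ (n - (i + 1)) := by
    intro i hi
    have hbi : (X : S[X]) ^ (E * (i + 1)) ∣ b (i + 1) := by
      have := hb (i + 1)
      rwa [Ideal.span_singleton_pow, ← pow_mul, Ideal.mem_span_singleton] at this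
    have hgi : (X : S[X]) ^ (k * (n - (i + 1))) ∣ g ^ (n - (i + 1)) := by
      rw [pow_mul]
      exact pow_dvd_pow_of_dvd hXk _
    have hprod := mul_dvd_mul hbi hgi
    rw [← pow_add] at hprod
    refine (pow_dvd_pow X ?_).trans hprod
    have hi : i + 1 ≤ n := Finset.mem_range.1 hi
    nlinarith [Nat.sub_add_cancel hi]
  have hcoeff : (g ^ n).coeff (n * k) = 0 := by
    rw [eq_neg_of_add_eq_zero_left heq, coeff_neg, finsetSum_coeff, neg_eq_zero]
    exact Finset.sum_eq_zero fun i hi => X_pow_dvd_iff.1 (hlow i hi) _ (Nat.lt_succ_self _)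
  apply trailingCoeff_nonzero_iff_nonzero.2 (pow_ne_zero n hg0)
  rwa [trailingCoeff, natTrailingDegree_pow hg0]

end Polynomial

namespace MvPolynomial

variable {R σ : Type*} [CommRing R]

/-- `f ↦ f(t ^ w v • X v)`, with `t` the variable of the outer polynomial ring. -/
noncomputable def weightedScaling (w : σ → ℕ) :
    MvPolynomial σ R →ₐ[R] Polynomial (MvPolynomial σ R) :=
  aeval fun v => Polynomial.C (X v) * Polynomial.X ^ w v

theorem weightedScaling_X (w : σ → ℕ) (v : σ) :
    weightedScaling w (X v : MvPolynomial σ R) = Polynomial.C (X v) * Polynomial.X ^ w v :=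
  aeval_X _ v

theorem weightedScaling_monomial (w : σ → ℕ) (d : σ →₀ ℕ) (c : R) :
    weightedScaling w (monomial d c) =
      Polynomial.C (monomial d c) * Polynomial.X ^ Finsupp.weight w d := by
  induction d using Finsupp.induction generalizing c with
  | zero => simp [weightedScaling, Polynomial.algebraMap_apply]
  | single_add v b d _ _ ih =>
    rw [monomial_single_add, map_mul, map_pow, weightedScaling_X, ih, map_add,
      Finsupp.weight_single, smul_eq_mul, pow_add, mul_comm b, pow_mul, map_mul, map_pow]
    ring

theorem coeff_weightedScaling (w : σ → ℕ) (f : MvPolynomial σ R) (n : ℕ) :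
    (weightedScaling w f).coeff n = weightedHomogeneousComponent w n f := by
  classical
  conv_lhs => rw [f.as_sum]
  simp only [map_sum, weightedScaling_monomial, Polynomial.finsetSum_coeff,
    Polynomial.coeff_C_mul_X_pow, weightedHomogeneousComponent_apply, Finset.sum_filter, eq_comm]

theorem le_weight_of_X_pow_dvd_weightedScaling {w : σ → ℕ} {E : ℕ} {f : MvPolynomial σ R}
    (h : Polynomial.X ^ E ∣ weightedScaling w f) {d : σ →₀ ℕ} (hd : d ∈ f.support) :
    E ≤ Finsupp.weight w d := by
  classical
  by_contra! hlt
  have hcomp := coeff_weightedScaling w f (Finsupp.weight w d) ▸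
    Polynomial.X_pow_dvd_iff.1 h _ hlt
  apply mem_support_iff.1 hd
  simpa [coeff_weightedHomogeneousComponent] using congrArg (coeff d) hcomp

theorem X_pow_dvd_weightedScaling_of_mem_span {w : σ → ℕ} {k : ℕ} {t : Set σ}
    (ht : ∀ v ∈ t, k ≤ w v) {f : MvPolynomial σ R} (hf : f ∈ Submodule.span R (X '' t)) :
    Polynomial.X ^ k ∣ weightedScaling w f := by
  suffices Submodule.span R (X '' t) ≤
      ((Ideal.span {Polynomial.X ^ k}).comap (weightedScaling w)).restrictScalars R from
    Ideal.mem_span_singleton.1 (this hf)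
  rw [Submodule.span_le]
  rintro _ ⟨v, hv, rfl⟩
  rw [SetLike.mem_coe, Submodule.restrictScalars_mem, Ideal.mem_comap, weightedScaling_X,
    Ideal.mem_span_singleton]
  exact (pow_dvd_pow _ (ht v hv)).mul_left _

theorem monomial_pow_mem_pow_weight {I : Ideal (MvPolynomial σ R)} {w : σ → ℕ} {E : ℕ}
    (hX : ∀ v, X v ^ E ∈ I ^ w v) (d : σ →₀ ℕ) (c : R) :
    monomial d c ^ E ∈ I ^ Finsupp.weight w d := by
  induction d using Finsupp.induction generalizing c with
  | zero => simp
  | single_add v b d _ _ ih =>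
    rw [monomial_single_add, mul_pow, ← pow_mul, mul_comm b, pow_mul, map_add,
      Finsupp.weight_single, smul_eq_mul, pow_add, mul_comm b, pow_mul]
    exact Ideal.mul_mem_mul (Ideal.pow_mem_pow (hX v) b) (ih c)

theorem mem_icl_of_le_weight [Nontrivial R] {I : Ideal (MvPolynomial σ R)} {w : σ → ℕ} {E : ℕ}
    (hE : 0 < E) (hX : ∀ v, X v ^ E ∈ I ^ w v) {f : MvPolynomial σ R}
    (hf : ∀ d ∈ f.support, E ≤ Finsupp.weight w d) : f ∈ icl I := by
  rw [f.as_sum]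
  exact sum_mem_icl_of_pow_mem_pow _ _ hE fun d hd =>
    Ideal.pow_le_pow_right (hf d hd) (monomial_pow_mem_pow_weight hX d _)

theorem le_weight_of_mem_icl [IsDomain R] {G : Set (MvPolynomial σ R)} {w : σ → ℕ} {E : ℕ}
    (hG : ∀ g ∈ G, Polynomial.X ^ E ∣ weightedScaling w g) {f : MvPolynomial σ R}
    (hf : f ∈ icl (Ideal.span G)) : ∀ d ∈ f.support, E ≤ Finsupp.weight w d := by
  have hspan : (Ideal.span G).map (weightedScaling w) ≤ Ideal.span {Polynomial.X ^ E} := by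
    rw [Ideal.map_span, Ideal.span_le]
    rintro _ ⟨g, hg, rfl⟩
    exact Ideal.mem_span_singleton.2 (hG g hg)
  refine fun d => le_weight_of_X_pow_dvd_weightedScaling (Polynomial.X_pow_dvd_of_mem_icl ?_)
  exact icl_mono hspan (image_icl_subset_icl_map _ _ ⟨f, hf, rfl⟩)

end MvPolynomial

theorem Submodule.map_symm_le_of_map_le {K V : Type*} [DivisionRing K] [AddCommGroup V]
    [Module K V] (e : V ≃ₗ[K] V) {F : Submodule K V} [FiniteDimensional K F]
    (h : F.map (e : V →ₗ[K] V) ≤ F) : F.map (e.symm : V →ₗ[K] V) ≤ F :=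
  ((Submodule.map_symm_eq_iff e).2
    (Submodule.eq_of_le_of_finrank_eq h (e.finrank_map_eq F))).le

section Flag

variable (R : Type*) [CommRing R] {ι : Type*} (κ : ι → Type*) (τ : Type*)

/-- The ideal `(x_{i,j} ^ e_i)`, writing `x_{i,j} = X (inl ⟨i, j⟩)` and `y_k = X (inr k)`. -/
noncomputable def powIdeal (e : ι → ℕ) : Ideal (MvPolynomial ((Σ i, κ i) ⊕ τ) R) :=
  Ideal.span {g | ∃ (i : ι) (j : κ i), g = X (Sum.inl ⟨i, j⟩) ^ e i}

noncomputable def flagSpan [LinearOrder ι] (i : ι) :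
    Submodule R (MvPolynomial ((Σ i, κ i) ⊕ τ) R) :=
  Submodule.span R {f | ∃ (i' : ι) (j' : κ i'), i' ≤ i ∧ f = X (Sum.inl ⟨i', j'⟩)}

variable {R κ τ}

/-- `x_{i,j}` gets weight `(∏ e) / e_i`, a multiple of `1 / e_i`, and `y_k` weight `0`. -/
def flagWeight [Fintype ι] (e : ι → ℕ) : (Σ i, κ i) ⊕ τ → ℕ :=
  Sum.elim (fun p => (∏ i, e i) / e p.1) 0

theorem X_pow_mem_powIdeal_pow [Fintype ι] (e : ι → ℕ) (v : (Σ i, κ i) ⊕ τ) :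
    X v ^ (∏ i, e i) ∈ powIdeal R κ τ e ^ flagWeight e v := by
  rcases v with ⟨i, j⟩ | y
  · have hgen : X (Sum.inl ⟨i, j⟩) ^ e i ∈ powIdeal R κ τ e := Ideal.subset_span ⟨i, j, rfl⟩
    have h := Ideal.pow_mem_pow hgen ((∏ i, e i) / e i)
    rwa [← pow_mul, Nat.mul_div_cancel' (Finset.dvd_prod_of_mem e (Finset.mem_univ i))] at h
  · simp [flagWeight]

variable [LinearOrder ι]

theorem flagSpan_mono {i i' : ι} (h : i' ≤ i) : flagSpan R κ τ i' ≤ flagSpan R κ τ i :=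
  Submodule.span_mono fun _ ⟨i'', j'', hi'', hf⟩ => ⟨i'', j'', hi''.trans h, hf⟩

instance [Finite ι] [∀ i, Finite (κ i)] (i : ι) : Module.Finite R (flagSpan R κ τ i) := by
  refine Module.Finite.span_of_finite R ((Set.finite_range fun p : Σ i, κ i =>
    (X (Sum.inl p) : MvPolynomial ((Σ i, κ i) ⊕ τ) R)).subset ?_)
  rintro _ ⟨i', j', -, rfl⟩
  exact Set.mem_range_self (⟨i', j'⟩ : Σ i, κ i)

theorem map_flagSpan_le
    (δ : MvPolynomial ((Σ i, κ i) ⊕ τ) R →ₗ[R] MvPolynomial ((Σ i, κ i) ⊕ τ) R)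
    (hδ : ∀ (i : ι) (j : κ i), δ (X (Sum.inl ⟨i, j⟩)) ∈ flagSpan R κ τ i) (i : ι) :
    (flagSpan R κ τ i).map δ ≤ flagSpan R κ τ i := by
  rw [Submodule.map_le_iff_le_comap, flagSpan, Submodule.span_le]
  rintro _ ⟨i', j', hi', rfl⟩
  exact flagSpan_mono hi' (hδ i' j')

variable [Fintype ι]

theorem X_pow_dvd_weightedScaling_of_mem_flagSpan {e : ι → ℕ} (hpos : ∀ i, 0 < e i)
    (hmono : Monotone e) {i : ι} {f : MvPolynomial ((Σ i, κ i) ⊕ τ) R}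
    (hf : f ∈ flagSpan R κ τ i) :
    Polynomial.X ^ ((∏ i, e i) / e i) ∣ weightedScaling (flagWeight e) f := by
  refine X_pow_dvd_weightedScaling_of_mem_span (t := {v | ∃ (i' : ι) (j' : κ i'), i' ≤ i ∧
    v = Sum.inl ⟨i', j'⟩}) ?_ (Submodule.span_mono ?_ hf)
  · rintro _ ⟨i', j', hi', rfl⟩
    exact Nat.div_le_div_left (hmono hi') (hpos i')
  · rintro _ ⟨i', j', hi', rfl⟩
    exact ⟨_, ⟨i', j', hi', rfl⟩, rfl⟩

theorem image_icl_powIdeal_subset [IsDomain R] {e : ι → ℕ} (hpos : ∀ i, 0 < e i)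
    (hmono : Monotone e)
    (δ : MvPolynomial ((Σ i, κ i) ⊕ τ) R ≃ₐ[R] MvPolynomial ((Σ i, κ i) ⊕ τ) R)
    (hδ : ∀ i, (flagSpan R κ τ i).map δ.toLinearMap ≤ flagSpan R κ τ i) :
    δ '' icl (powIdeal R κ τ e) ⊆ icl (powIdeal R κ τ e) := by
  rintro _ ⟨f, hf, rfl⟩
  have hδf := image_icl_subset_icl_map δ _ ⟨f, hf, rfl⟩
  rw [powIdeal, Ideal.map_span] at hδf
  refine mem_icl_of_le_weight (Finset.prod_pos fun i _ => hpos i) (X_pow_mem_powIdeal_pow e)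
    (le_weight_of_mem_icl ?_ hδf)
  rintro _ ⟨_, ⟨i, j, rfl⟩, rfl⟩
  have hX := X_pow_dvd_weightedScaling_of_mem_flagSpan hpos hmono
    (hδ i (Submodule.mem_map_of_mem (Submodule.subset_span ⟨i, j, le_rfl, rfl⟩)))
  rw [map_pow, map_pow, ← Nat.div_mul_cancel (Finset.dvd_prod_of_mem e (Finset.mem_univ i)),
    pow_mul]
  exact pow_dvd_pow_of_dvd hX _

end Flag

theorem stmt15_general (L : Type*) [Field L] (r s : ℕ) (a : Fin r → ℕ) (e : Fin r → ℕ)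
    (hpos : ∀ i, 0 < e i) (hmono : StrictMono e)
    (γ : MvPolynomial ((Σ i : Fin r, Fin (a i)) ⊕ Fin s) L ≃ₐ[L]
          MvPolynomial ((Σ i : Fin r, Fin (a i)) ⊕ Fin s) L)
    (hflag : ∀ (i : Fin r) (j : Fin (a i)),
      γ (X (Sum.inl ⟨i, j⟩)) ∈ Submodule.span L
        {f : MvPolynomial ((Σ i : Fin r, Fin (a i)) ⊕ Fin s) L |
          ∃ (i' : Fin r) (j' : Fin (a i')), i' ≤ i ∧ f = X (Sum.inl ⟨i', j'⟩)}) :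
    ⇑γ '' icl (Ideal.span
        {g : MvPolynomial ((Σ i : Fin r, Fin (a i)) ⊕ Fin s) L |
          ∃ (i : Fin r) (j : Fin (a i)), g = X (Sum.inl ⟨i, j⟩) ^ e i}) =
      icl (Ideal.span
        {g : MvPolynomial ((Σ i : Fin r, Fin (a i)) ⊕ Fin s) L |
          ∃ (i : Fin r) (j : Fin (a i)), g = X (Sum.inl ⟨i, j⟩) ^ e i}) := by
  have hγ : ∀ i, (flagSpan L _ (Fin s) i).map γ.toLinearMap ≤ flagSpan L _ (Fin s) i :=
    map_flagSpan_le γ.toLinearMap hflag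
  have hγsymm : ∀ i, (flagSpan L _ (Fin s) i).map γ.symm.toLinearMap ≤ flagSpan L _ (Fin s) i :=
    fun i => Submodule.map_symm_le_of_map_le γ.toLinearEquiv (hγ i)
  exact (image_icl_powIdeal_subset hpos hmono.monotone γ hγ).antisymm fun f hf =>
    ⟨γ.symm f, image_icl_powIdeal_subset hpos hmono.monotone γ.symm hγsymm ⟨f, hf, rfl⟩,
      γ.apply_symm_apply f⟩

/-- with variables `x_{i,j}` (`1 ≤ i ≤ r`, `1 ≤ j ≤ a_i`) and
`y_1,…,y_s`, `e_1 < ⋯ < e_r` positive, and `D` the integral closure of the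
ideal generated by all `x_{i,j}^{e_i}`: any graded automorphism `γ` acting
linearly on the variables and fixing the flag
`span(x_{1,*}) ⊆ span(x_{1,*},x_{2,*}) ⊆ ⋯` satisfies `γ D = D`. -/
theorem stmt15 (L : Type*) [Field L] (r s : ℕ) (a : Fin r → ℕ) (e : Fin r → ℕ)
    (hpos : ∀ i, 0 < e i) (hmono : StrictMono e)
    (γ : MvPolynomial ((Σ i : Fin r, Fin (a i)) ⊕ Fin s) L ≃ₐ[L]
          MvPolynomial ((Σ i : Fin r, Fin (a i)) ⊕ Fin s) L)
    (hlin : ∀ v, γ (X v) ∈ Submodule.span L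
      (Set.range (X : ((Σ i : Fin r, Fin (a i)) ⊕ Fin s) →
        MvPolynomial ((Σ i : Fin r, Fin (a i)) ⊕ Fin s) L)))
    (hflag : ∀ (i : Fin r) (j : Fin (a i)),
      γ (X (Sum.inl ⟨i, j⟩)) ∈ Submodule.span L
        {f : MvPolynomial ((Σ i : Fin r, Fin (a i)) ⊕ Fin s) L |
          ∃ (i' : Fin r) (j' : Fin (a i')), i' ≤ i ∧ f = X (Sum.inl ⟨i', j'⟩)}) :
    ⇑γ '' icl (Ideal.span
        {g : MvPolynomial ((Σ i : Fin r, Fin (a i)) ⊕ Fin s) L |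
          ∃ (i : Fin r) (j : Fin (a i)), g = X (Sum.inl ⟨i, j⟩) ^ e i}) =
      icl (Ideal.span
        {g : MvPolynomial ((Σ i : Fin r, Fin (a i)) ⊕ Fin s) L |
          ∃ (i : Fin r) (j : Fin (a i)), g = X (Sum.inl ⟨i, j⟩) ^ e i}) :=
  stmt15_general L r s a e hpos hmono γ hflag
end

section
/- Let R = k[x_1,...,x_n] be a polynomial ring over a field of characteristic p > 0, m the homogeneous maximal ideal, and I_1, I_2 homogeneous ideals generated in degrees d_1 < d_2 respectively such that I = I_1 + I_2 is m-primary with m^{d_2} ⊆ integral closure of I. Then for all e, ν_I(p^e) = (n p^e - n)/d_2 + ν_{I_1}(p^e)·(d_2 - d_1)/d_2 rounded appropriately, and consequently the F-pure threshold satisfies c(I) = n/d_2 + c(I_1)·(d_2 - d_1)/d_2. -/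
open MvPolynomial Filter

/-- `ν_J(q) = max { t : J^t ⊄ (x_1^q,…,x_n^q) }`. -/
noncomputable def nuF {k : Type*} [Field k] {n : ℕ}
    (J : Ideal (MvPolynomial (Fin n) k)) (q : ℕ) : ℕ :=
  sSup {t : ℕ | ¬ J ^ t ≤ Ideal.span (Set.range fun i : Fin n => (X i : MvPolynomial (Fin n) k) ^ q)}

/-!
Let `m = (x₁, …, xₙ)`, `ν = ν_{I₁}(q)` and `J = I₁ + m^{d₂}`. Then `ν_J(q)` can be computed
exactly: some product of `ν` generators of `I₁` has a monomial `x^d ∉ m^[q]` of degree `d₁ν`,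
and there is room to multiply it by a monomial of degree `d₂ ⌊(n(q-1) - d₁ν)/d₂⌋` without
entering `m^[q]`; conversely, a product of `ν + b + 1` factors from `I₁` and `m^{d₂}` either lies
in `I₁^{ν+1} ⊆ m^[q]` or has degree `> n(q-1)`, which forces it into `m^[q]`. So
`ν_J(q) = ν + ⌊(n(q-1) - d₁ν)/d₂⌋`.

Since `I ⊆ J` and `m^{d₂}` is a finitely generated ideal integral over `I`, there is a constant `C`
with `J^t ⊆ I^{t-C}` for all `t`, hence `ν_J(q) - C ≤ ν_I(q) ≤ ν_J(q)`. Dividing by `q = p^e`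
and letting `e → ∞` gives the limit.
-/

open Topology

namespace Ideal

variable {R : Type*} [CommSemiring R]

theorem add_pow_le_of_forall_pow_mul_pow_le {P Q L : Ideal R} {t : ℕ}
    (h : ∀ a ≤ t, P ^ a * Q ^ (t - a) ≤ L) : (P + Q) ^ t ≤ L := by
  rw [add_pow, sum_eq_sup]
  exact Finset.sup_le fun a ha =>
    mul_le_left.trans (h a (Nat.lt_succ_iff.1 (Finset.mem_range.1 ha)))

theorem add_pow_le_pow_sub_add {P Q I : Ideal R} {c C : ℕ} (hP : ∀ a, P ^ a ≤ I ^ (a - c))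
    (hQ : ∀ b, Q ^ b ≤ I ^ (b - C)) (t : ℕ) : (P + Q) ^ t ≤ I ^ (t - (c + C)) :=
  add_pow_le_of_forall_pow_mul_pow_le fun a _ =>
    (mul_mono (hP a) (hQ (t - a))).trans <| by
      rw [← pow_add]; exact pow_le_pow_right (by omega)

end Ideal

section IntegralClosure

variable {R : Type*} [CommRing R] {I : Ideal R}

theorem exists_pow_mem_pow_sub_of_mem_icl {r : R} (hr : r ∈ icl I) :
    ∃ c, ∀ s, r ^ s ∈ I ^ (s - c) := by
  obtain ⟨N, hN, a, ha, heq⟩ := hr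
  refine ⟨N - 1, fun s => Nat.strong_induction_on s fun s IH => ?_⟩
  rcases lt_or_ge s N with hsN | hsN
  · rw [Nat.sub_eq_zero_of_le (by omega), pow_zero, Ideal.one_eq_top]
    exact Submodule.mem_top
  have hrs : r ^ s = -∑ i ∈ Finset.range N, a (i + 1) * r ^ (s - (i + 1)) := by
    have h := congrArg (r ^ (s - N) * ·) heq
    simp only [mul_add, Finset.mul_sum, mul_zero] at h
    rw [eq_neg_iff_add_eq_zero, ← h]
    congr 1
    · rw [← pow_add, Nat.sub_add_cancel hsN]
    · refine Finset.sum_congr rfl fun i hi => ?_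
      have := Finset.mem_range.1 hi
      rw [mul_left_comm, ← pow_add]
      congr 2
      omega
  rw [hrs]
  refine neg_mem (Ideal.sum_mem _ fun i hi => ?_)
  have hiN := Finset.mem_range.1 hi
  have h := Ideal.mul_mem_mul (ha (i + 1)) (IH (s - (i + 1)) (by omega))
  rw [← pow_add] at h
  exact Ideal.pow_le_pow_right (by omega) h

theorem exists_span_pow_le_pow_sub (F : Finset R) (hF : ∀ g ∈ F, ∃ c, ∀ s, g ^ s ∈ I ^ (s - c)) :
    ∃ C, ∀ b, Ideal.span (F : Set R) ^ b ≤ I ^ (b - C) := by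
  classical
  induction F using Finset.induction with
  | empty => exact ⟨0, fun b => by simpa using Ideal.pow_right_mono bot_le b⟩
  | insert g F _ IH =>
    obtain ⟨c, hc⟩ := hF g (Finset.mem_insert_self g F)
    obtain ⟨C, hC⟩ := IH fun g' hg' => hF g' (Finset.mem_insert_of_mem hg')
    refine ⟨c + C, fun b => ?_⟩
    rw [Finset.coe_insert, Ideal.span_insert, ← Ideal.add_eq_sup]
    refine Ideal.add_pow_le_pow_sub_add (fun a => ?_) hC b
    rw [Ideal.span_singleton_pow, Ideal.span_singleton_le_iff_mem]
    exact hc a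

theorem exists_pow_le_pow_sub_of_subset_icl {K : Ideal R} (hK : K.FG) (h : (K : Set R) ⊆ icl I) :
    ∃ C, ∀ b, K ^ b ≤ I ^ (b - C) := by
  obtain ⟨F, rfl⟩ := hK
  exact exists_span_pow_le_pow_sub F fun g hg =>
    exists_pow_mem_pow_sub_of_mem_icl (h (Ideal.subset_span hg))

end IntegralClosure

namespace MvPolynomial

section VarPows

variable (σ R : Type*) [CommSemiring R]

noncomputable abbrev idealOfVarPows (q : ℕ) : Ideal (MvPolynomial σ R) :=
  .span (.range fun i => X i ^ q)

variable {σ R}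

theorem mem_idealOfVarPows_iff {q : ℕ} {f : MvPolynomial σ R} :
    f ∈ idealOfVarPows σ R q ↔ ∀ d ∈ f.support, ∃ i, q ≤ d i := by
  have : (Set.range fun i => (X i : MvPolynomial σ R) ^ q) =
      (monomial · 1) '' Set.range fun i => Finsupp.single i q := by
    rw [← Set.range_comp]
    congr 1
    ext1 i
    exact X_pow_eq_monomial
  simp [idealOfVarPows, this, mem_ideal_span_monomial_image, Finsupp.single_le_iff]

theorem one_notMem_idealOfVarPows [Nontrivial R] {q : ℕ} (hq : q ≠ 0) :
    (1 : MvPolynomial σ R) ∉ idealOfVarPows σ R q := by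
  classical
  simp [mem_idealOfVarPows_iff, support_one, hq]

theorem pow_idealOfVars_le_idealOfVarPows [Fintype σ] {q D : ℕ}
    (hD : Fintype.card σ * (q - 1) < D) : idealOfVars σ R ^ D ≤ idealOfVarPows σ R q := by
  intro f hf
  rw [mem_pow_idealOfVars_iff] at hf
  refine mem_idealOfVarPows_iff.2 fun d hd => ?_
  by_contra! hlt
  have : d.degree ≤ Fintype.card σ * (q - 1) := by
    rw [Finsupp.degree_eq_sum]
    simpa using Finset.sum_le_sum fun i (_ : i ∈ Finset.univ) => Nat.le_sub_one_of_lt (hlt i)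
  have := hf d hd
  omega

theorem exists_mul_notMem_idealOfVarPows [Fintype σ] {q A s : ℕ} {w : MvPolynomial σ R}
    (hw : w.IsHomogeneous A) (hwq : w ∉ idealOfVarPows σ R q)
    (hs : A + s ≤ Fintype.card σ * (q - 1)) :
    ∃ u ∈ idealOfVars σ R ^ s, w * u ∉ idealOfVarPows σ R q := by
  simp only [mem_idealOfVarPows_iff, not_forall, not_exists, not_le] at hwq
  obtain ⟨d, hd, hdq⟩ := hwq
  have hdA : d.degree = A := by
    rw [Finsupp.degree_eq_weight_one]; exact hw (mem_support_iff.1 hd)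
  let room : σ →₀ ℕ := Finsupp.equivFunOnFinite.symm fun i => q - 1 - d i
  have hroom : s ≤ room.degree := by
    rw [Finsupp.degree_eq_sum] at hdA ⊢
    simp only [room, Finsupp.coe_equivFunOnFinite_symm]
    rw [Finset.sum_tsub_distrib _ fun i _ => Nat.le_sub_one_of_lt (hdq i)]
    rw [hdA, Finset.sum_const, Finset.card_univ, smul_eq_mul]
    omega
  obtain ⟨e, her, rfl⟩ := Finsupp.exists_le_degree_eq room s hroom
  refine ⟨monomial e 1, ?_, ?_⟩
  · rw [pow_idealOfVars_eq_span]
    exact Ideal.subset_span ⟨e, rfl, rfl⟩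
  rw [mem_idealOfVarPows_iff]
  intro h
  obtain ⟨i, hi⟩ := h (d + e) (by
    rw [mem_support_iff, coeff_mul_monomial, mul_one]; exact mem_support_iff.1 hd)
  have := her i
  have := hdq i
  simp only [room, Finsupp.coe_add, Pi.add_apply, Finsupp.coe_equivFunOnFinite_symm] at *
  omega

end VarPows

section Homogeneous

open Pointwise

variable {σ R : Type*} [CommSemiring R] {D : ℕ} {G : Set (MvPolynomial σ R)}

theorem isHomogeneous_of_mem_pow (hG : ∀ g ∈ G, g.IsHomogeneous D) :
    ∀ a, ∀ w ∈ G ^ a, w.IsHomogeneous (D * a)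
  | 0, w, hw => by
    rw [pow_zero, Set.mem_one] at hw
    exact hw ▸ isHomogeneous_one σ R
  | a + 1, _, hw => by
    obtain ⟨x, hx, y, hy, rfl⟩ := Set.mem_mul.1 (pow_succ G a ▸ hw)
    exact (isHomogeneous_of_mem_pow hG a x hx).mul (hG y hy)

theorem exists_isHomogeneous_mem_pow_notMem (hG : ∀ g ∈ G, g.IsHomogeneous D) {a : ℕ}
    {L : Ideal (MvPolynomial σ R)} (h : ¬ Ideal.span G ^ a ≤ L) :
    ∃ w ∈ Ideal.span G ^ a, w.IsHomogeneous (D * a) ∧ w ∉ L := by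
  rw [Ideal.span, Submodule.span_pow] at h ⊢
  obtain ⟨w, hw, hwL⟩ := Set.not_subset.1 (mt Submodule.span_le.2 h)
  exact ⟨w, Submodule.subset_span hw, isHomogeneous_of_mem_pow hG a w hw, hwL⟩

theorem span_le_pow_idealOfVars (hG : ∀ g ∈ G, g.IsHomogeneous D) :
    Ideal.span G ≤ idealOfVars σ R ^ D :=
  Ideal.span_le.2 fun g hg => (mem_pow_idealOfVars_iff _ _).2 fun d hd => by
    rw [Finsupp.degree_eq_weight_one]; exact (hG g hg (mem_support_iff.1 hd)).ge

end Homogeneous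

end MvPolynomial

section FThreshold

variable {k : Type*} [Field k] {n q : ℕ} {J J' : Ideal (MvPolynomial (Fin n) k)}

theorem bddAbove_setOf_not_pow_le (hJ : J ≤ idealOfVars (Fin n) k) :
    BddAbove {t | ¬ J ^ t ≤ idealOfVarPows (Fin n) k q} := by
  refine ⟨n * (q - 1), fun t ht => ?_⟩
  by_contra! hlt
  exact ht ((Ideal.pow_right_mono hJ t).trans
    (pow_idealOfVars_le_idealOfVarPows (by simpa using hlt)))

theorem le_nuF_iff (hq : q ≠ 0) (hJ : J ≤ idealOfVars (Fin n) k) {t : ℕ} :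
    t ≤ nuF J q ↔ ¬ J ^ t ≤ idealOfVarPows (Fin n) k q := by
  refine ⟨fun ht hle => ?_, fun ht => le_csSup (bddAbove_setOf_not_pow_le hJ) ht⟩
  have hzero : ¬ J ^ 0 ≤ idealOfVarPows (Fin n) k q := fun h =>
    one_notMem_idealOfVarPows hq (h (by simp))
  exact Nat.sSup_mem ⟨0, hzero⟩ (bddAbove_setOf_not_pow_le hJ)
    ((Ideal.pow_le_pow_right ht).trans hle)

theorem nuF_lt_iff (hq : q ≠ 0) (hJ : J ≤ idealOfVars (Fin n) k) {t : ℕ} :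
    nuF J q < t ↔ J ^ t ≤ idealOfVarPows (Fin n) k q := by
  rw [← not_le, le_nuF_iff hq hJ, not_not]

theorem nuF_mono (hq : q ≠ 0) (hJ' : J' ≤ idealOfVars (Fin n) k) (h : J ≤ J') :
    nuF J q ≤ nuF J' q :=
  (le_nuF_iff hq hJ').2 fun hle =>
    (le_nuF_iff hq (h.trans hJ')).1 le_rfl ((Ideal.pow_right_mono h _).trans hle)

theorem nuF_sub_le_of_pow_le (hq : q ≠ 0) (hJ : J ≤ idealOfVars (Fin n) k)
    (hJ' : J' ≤ idealOfVars (Fin n) k) {C : ℕ} (h : ∀ t, J' ^ t ≤ J ^ (t - C)) :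
    nuF J' q - C ≤ nuF J q :=
  (le_nuF_iff hq hJ).2 fun hle => (le_nuF_iff hq hJ').1 le_rfl ((h _).trans hle)

theorem mul_nuF_le (hq : q ≠ 0) (hJ : J ≤ idealOfVars (Fin n) k) {D : ℕ}
    (hJD : J ≤ idealOfVars (Fin n) k ^ D) : D * nuF J q ≤ n * (q - 1) := by
  by_contra! hlt
  refine (le_nuF_iff hq hJ).1 le_rfl ((Ideal.pow_right_mono hJD _).trans ?_)
  rw [← pow_mul]
  exact pow_idealOfVars_le_idealOfVarPows (by simpa using hlt)


theorem nuF_add_pow_idealOfVars {G : Set (MvPolynomial (Fin n) k)} {d1 d2 : ℕ}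
    (hG : ∀ g ∈ G, g.IsHomogeneous d1) (hGm : Ideal.span G ≤ idealOfVars (Fin n) k)
    (hd : d1 ≤ d2) (hd2 : d2 ≠ 0) (hq : q ≠ 0) :
    nuF (Ideal.span G + idealOfVars (Fin n) k ^ d2) q =
      nuF (Ideal.span G) q + (n * (q - 1) - d1 * nuF (Ideal.span G) q) / d2 := by
  set ν := nuF (Ideal.span G) q
  set b := (n * (q - 1) - d1 * ν) / d2
  have hJ : Ideal.span G + idealOfVars (Fin n) k ^ d2 ≤ idealOfVars (Fin n) k :=
    sup_le hGm (Ideal.pow_le_self hd2)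
  have hA : d1 * ν ≤ n * (q - 1) := mul_nuF_le hq hGm (span_le_pow_idealOfVars hG)
  refine le_antisymm (Nat.lt_succ_iff.1 ((nuF_lt_iff hq hJ).2 ?_)) ((le_nuF_iff hq hJ).2 ?_)
  · have hb : n * (q - 1) - d1 * ν < d2 * (b + 1) := Nat.lt_mul_div_succ _ (Nat.pos_of_ne_zero hd2)
    refine Ideal.add_pow_le_of_forall_pow_mul_pow_le fun a ha => ?_
    rcases le_or_gt a ν with haν | hνa
    · refine (Ideal.mul_mono (Ideal.pow_right_mono (span_le_pow_idealOfVars hG) a)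
        le_rfl).trans ?_
      rw [← pow_mul, ← pow_mul, ← pow_add]
      refine pow_idealOfVars_le_idealOfVarPows ?_
      have hsplit : d1 * a + d1 * (ν - a) = d1 * ν := by rw [← mul_add, Nat.add_sub_cancel' haν]
      have : d1 * (ν - a) ≤ d2 * (ν - a) := Nat.mul_le_mul_right _ hd
      rw [Fintype.card_fin, show ν + b + 1 - a = (ν - a) + (b + 1) by omega, mul_add d2]
      omega
    · exact Ideal.mul_le_left.trans ((Ideal.pow_le_pow_right hνa).trans
        ((nuF_lt_iff hq hGm).1 (lt_add_one ν)))
  · intro hle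
    obtain ⟨w, hwG, hw, hwq⟩ :=
      exists_isHomogeneous_mem_pow_notMem hG ((le_nuF_iff hq hGm).1 le_rfl)
    have hs : d1 * ν + d2 * b ≤ Fintype.card (Fin n) * (q - 1) := by
      have : d2 * b ≤ n * (q - 1) - d1 * ν := Nat.mul_div_le _ _
      rw [Fintype.card_fin]
      omega
    obtain ⟨u, hu, hwu⟩ := exists_mul_notMem_idealOfVarPows hw hwq hs
    refine hwu (hle ?_)
    rw [pow_add]
    exact Ideal.mul_mem_mul (Ideal.pow_right_mono le_sup_left _ hwG)
      (Ideal.pow_right_mono le_sup_right _ (by rwa [← pow_mul]))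

theorem abs_nuF_add_sub_le {G : Set (MvPolynomial (Fin n) k)} {I2 : Ideal (MvPolynomial (Fin n) k)}
    {d1 d2 C : ℕ}
    (hG : ∀ g ∈ G, g.IsHomogeneous d1) (hI2 : I2 ≤ idealOfVars (Fin n) k ^ d2) (hd : d1 < d2)
    (hI : Ideal.span G + I2 ≤ idealOfVars (Fin n) k)
    (hC : ∀ b, (idealOfVars (Fin n) k ^ d2) ^ b ≤ (Ideal.span G + I2) ^ (b - C)) (hq : q ≠ 0) :
    |(nuF (Ideal.span G + I2) q : ℝ) - (nuF (Ideal.span G) q +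
      ((n : ℝ) * (q - 1) - d1 * nuF (Ideal.span G) q) / d2)| ≤ C + 1 := by
  set ν := nuF (Ideal.span G) q
  set J := Ideal.span G + idealOfVars (Fin n) k ^ d2
  have hGm : Ideal.span G ≤ idealOfVars (Fin n) k := le_sup_left.trans hI
  have hJ : J ≤ idealOfVars (Fin n) k := sup_le hGm (Ideal.pow_le_self (by omega))
  have hJI : ∀ t, J ^ t ≤ (Ideal.span G + I2) ^ (t - (0 + C)) :=
    Ideal.add_pow_le_pow_sub_add (fun a => by simpa using Ideal.pow_right_mono le_sup_left a) hC
  have hupper := nuF_mono hq hJ (sup_le_sup_left hI2 _)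
  have hlower := Nat.sub_le_iff_le_add.1 (nuF_sub_le_of_pow_le hq hI hJ hJI)
  rw [nuF_add_pow_idealOfVars hG hGm hd.le (by omega) hq] at hupper hlower
  rw [zero_add] at hlower
  have hA : d1 * ν ≤ n * (q - 1) := mul_nuF_le hq hGm (span_le_pow_idealOfVars hG)
  have hfloor := Nat.floor_div_eq_div (K := ℝ) (n * (q - 1) - d1 * ν) d2
  have hcast : ((n * (q - 1) - d1 * ν : ℕ) : ℝ) = n * (q - 1) - d1 * ν := by
    push_cast [Nat.cast_sub hA, Nat.cast_sub (Nat.one_le_iff_ne_zero.2 hq)]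
    ring
  rw [hcast] at hfloor
  have hnonneg : (0 : ℝ) ≤ (n * (q - 1) - d1 * ν) / d2 := hcast ▸ by positivity
  have hfl := Nat.floor_le hnonneg
  have hlt := Nat.lt_floor_add_one ((n * (q - 1) - d1 * ν : ℝ) / d2)
  rw [hfloor] at hfl hlt
  have hupper' : (nuF (Ideal.span G + I2) q : ℝ) ≤ ν + ((n * (q - 1) - d1 * ν) / d2 : ℕ) := by
    exact_mod_cast hupper
  have hlower' : (ν + ((n * (q - 1) - d1 * ν) / d2 : ℕ) : ℝ) ≤ nuF (Ideal.span G + I2) q + C := by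
    exact_mod_cast hlower
  rw [abs_le]
  constructor <;> linarith

end FThreshold

theorem tendsto_div_pow_of_abs_sub_le {p n d1 d2 : ℕ} (hp : 1 < p) (hd2 : d2 ≠ 0)
    {ν ν1 : ℕ → ℕ} {c1 K : ℝ} (hc1 : Tendsto (fun e => (ν1 e : ℝ) / (p : ℝ) ^ e) atTop (𝓝 c1))
    (h : ∀ e, |(ν e : ℝ) - (ν1 e + ((n : ℝ) * ((p : ℝ) ^ e - 1) - d1 * ν1 e) / d2)| ≤ K) :
    Tendsto (fun e => (ν e : ℝ) / (p : ℝ) ^ e) atTop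
      (𝓝 ((n : ℝ) / d2 + c1 * (((d2 : ℝ) - d1) / d2))) := by
  have hpos : ∀ e : ℕ, (0 : ℝ) < (p : ℝ) ^ e := fun e => pow_pos (by positivity) e
  have hinv : Tendsto (fun e : ℕ => ((p : ℝ) ^ e)⁻¹) atTop (𝓝 0) :=
    tendsto_inv_atTop_zero.comp (tendsto_pow_atTop_atTop_of_one_lt (by exact_mod_cast hp))
  have hmain : Tendsto (fun e => ((ν1 e : ℝ) + ((n : ℝ) * ((p : ℝ) ^ e - 1) - d1 * ν1 e) / d2) /
      (p : ℝ) ^ e) atTop (𝓝 ((n : ℝ) / d2 + c1 * (((d2 : ℝ) - d1) / d2))) := by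
    have := (((tendsto_const_nhds (x := (1 : ℝ))).sub hinv).const_mul ((n : ℝ) / d2)).add
      (hc1.mul_const (((d2 : ℝ) - d1) / d2))
    rw [sub_zero, mul_one] at this
    refine this.congr fun e => ?_
    have := (hpos e).ne'
    field_simp
    ring
  refine hmain.congr_dist (squeeze_zero (fun _ => dist_nonneg) (fun e => ?_)
    (by simpa using hinv.const_mul K))
  rw [Real.dist_eq, ← sub_div, abs_div, abs_of_pos (hpos e), abs_sub_comm, div_eq_mul_inv]
  exact mul_le_mul_of_nonneg_right (h e) (inv_nonneg.2 (hpos e).le)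

theorem stmt16_general (k : Type*) [Field k] (p : ℕ) (hp : p.Prime) (n : ℕ)
    (I1 I2 : Ideal (MvPolynomial (Fin n) k)) (d1 d2 : ℕ) (hd : d1 < d2)
    (h1 : ∃ G : Set (MvPolynomial (Fin n) k),
      (∀ g ∈ G, g.IsHomogeneous d1) ∧ I1 = Ideal.span G)
    (h2 : ∃ G : Set (MvPolynomial (Fin n) k),
      (∀ g ∈ G, g.IsHomogeneous d2) ∧ I2 = Ideal.span G)
    (hprim : (I1 + I2).radical =
      Ideal.span (Set.range (X : Fin n → MvPolynomial (Fin n) k)))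
    (hic : ((Ideal.span (Set.range (X : Fin n → MvPolynomial (Fin n) k)) ^ d2 :
        Ideal (MvPolynomial (Fin n) k)) : Set _) ⊆ icl (I1 + I2))
    (c1 : ℝ)
    (hc1 : Tendsto (fun e : ℕ => (nuF I1 (p ^ e) : ℝ) / ((p : ℝ) ^ e)) atTop (nhds c1)) :
    Tendsto (fun e : ℕ => (nuF (I1 + I2) (p ^ e) : ℝ) / ((p : ℝ) ^ e)) atTop
      (nhds ((n : ℝ) / (d2 : ℝ) + c1 * (((d2 : ℝ) - (d1 : ℝ)) / (d2 : ℝ)))) := by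
  obtain ⟨G1, hG1, rfl⟩ := h1
  obtain ⟨G2, hG2, rfl⟩ := h2
  have hI : Ideal.span G1 + Ideal.span G2 ≤ idealOfVars (Fin n) k :=
    hprim.le.trans' Ideal.le_radical
  obtain ⟨C, hC⟩ := exists_pow_le_pow_sub_of_subset_icl (idealOfVars_fg (Fin n) k).pow hic
  refine tendsto_div_pow_of_abs_sub_le (K := C + 1) hp.one_lt (by omega) hc1 fun e => ?_
  simpa using abs_nuF_add_sub_le hG1 (span_le_pow_idealOfVars hG2) hd hI hC
    (pow_ne_zero e hp.ne_zero)

/-- with `I = I_1 + I_2` an `m`-primary homogeneous ideal,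
`I_1` generated by `d_1`-forms, `I_2` by `d_2`-forms, `d_1 < d_2`, and
`m^{d_2}` contained in the integral closure of `I`, the F-pure thresholds
satisfy `c(I) = n/d_2 + c(I_1)·(d_2 - d_1)/d_2`. -/
theorem stmt16 (k : Type*) [Field k] (p : ℕ) (hp : p.Prime) [CharP k p] (n : ℕ)
    (I1 I2 : Ideal (MvPolynomial (Fin n) k)) (d1 d2 : ℕ) (hd : d1 < d2)
    (h1 : ∃ G : Set (MvPolynomial (Fin n) k),
      (∀ g ∈ G, g.IsHomogeneous d1) ∧ I1 = Ideal.span G)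
    (h2 : ∃ G : Set (MvPolynomial (Fin n) k),
      (∀ g ∈ G, g.IsHomogeneous d2) ∧ I2 = Ideal.span G)
    (hprim : (I1 + I2).radical =
      Ideal.span (Set.range (X : Fin n → MvPolynomial (Fin n) k)))
    (hic : ((Ideal.span (Set.range (X : Fin n → MvPolynomial (Fin n) k)) ^ d2 :
        Ideal (MvPolynomial (Fin n) k)) : Set _) ⊆ icl (I1 + I2))
    (c1 : ℝ)
    (hc1 : Tendsto (fun e : ℕ => (nuF I1 (p ^ e) : ℝ) / ((p : ℝ) ^ e)) atTop (nhds c1)) :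
    Tendsto (fun e : ℕ => (nuF (I1 + I2) (p ^ e) : ℝ) / ((p : ℝ) ^ e)) atTop
      (nhds ((n : ℝ) / (d2 : ℝ) + c1 * (((d2 : ℝ) - (d1 : ℝ)) / (d2 : ℝ)))) :=
  stmt16_general k p hp n I1 I2 d1 d2 hd h1 h2 hprim hic c1 hc1
end

section
/- Let R = k[x_1,...,x_n] be a polynomial ring over a field of characteristic p > 0, m the homogeneous maximal ideal, I ⊆ R an ideal with m^d contained in the integral closure of I, and H a hyperplane through the origin cut out by a linear form ℓ. Then the F-pure thresholds satisfy c(I) - c(I|_H) ≥ 1/d, where I|_H is the image of I in R/ℓR. -/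
open MvPolynomial Filter

/-- `ν_I(q)` relative to a "Frobenius power" ideal `Fr`:
`max { t : I^t ⊄ Fr }`. -/
noncomputable def nuRel {R : Type*} [CommRing R] (I Fr : Ideal R) : ℕ :=
  sSup {t : ℕ | ¬ I ^ t ≤ Fr}

/-- The Frobenius power `(x_1^q,…,x_n^q)` of the homogeneous maximal ideal. -/
noncomputable def frobM (k : Type*) [Field k] (n q : ℕ) :
    Ideal (MvPolynomial (Fin n) k) :=
  Ideal.span (Set.range fun i : Fin n => (X i : MvPolynomial (Fin n) k) ^ q)

/-!
Write `q = p ^ e`. Since `ℓ ^ d` is integral over `I`, there is an `N` with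
`ℓ ^ (d * s) ∈ I ^ (s + 1 - N)` for all `s`, hence `ℓ ^ (q - 1) ∈ I ^ (⌈q / d⌉ - N)`, where
`⌈q / d⌉ = (q - 1) / d + 1` in `ℕ`. A linear change of coordinates turning `ℓ` into a variable
preserves the Frobenius power `𝔪^[q]`, and for a variable one reads off from monomials that
`(𝔪^[q] : ℓ ^ (q - 1)) ⊆ 𝔪^[q] + (ℓ)`. So if `f ∈ I ^ t` survives modulo `𝔪^[q] + (ℓ)`, then
`f * ℓ ^ (q - 1) ∈ I ^ (t + ⌈q / d⌉ - N)` survives modulo `𝔪^[q]`, i.e.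
`ν_I(q) ≥ ν_{I|H}(q) + ⌈q / d⌉ - N`. Dividing by `q` and letting `e → ∞` gives
`c(I) - c(I|H) ≥ 1 / d`.
-/

lemma pow_mem_pow_sub_of_mem_icl {R : Type*} [CommRing R] {I : Ideal R} {r : R} (hr : r ∈ icl I) :
    ∃ N : ℕ, ∀ m : ℕ, r ^ m ∈ I ^ (m + 1 - N) := by
  obtain ⟨N, -, a, ha, heq⟩ := hr
  refine ⟨N, fun m => ?_⟩
  induction m using Nat.strong_induction_on with
  | _ m ih =>
    by_cases hm : m + 1 ≤ N
    · simp [Nat.sub_eq_zero_of_le hm]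
    have hrm : r ^ m = -∑ i ∈ Finset.range N, a (i + 1) * r ^ (m - (i + 1)) := by
      conv_lhs => rw [show m = N + (m - N) by omega, pow_add, eq_neg_of_add_eq_zero_left heq]
      rw [neg_mul, Finset.sum_mul]
      congr 1
      refine Finset.sum_congr rfl fun i hi => ?_
      rw [mul_assoc, ← pow_add]
      congr 2
      have := Finset.mem_range.1 hi
      omega
    rw [hrm]
    refine neg_mem (Ideal.sum_mem _ fun i hi => ?_)
    have hi := Finset.mem_range.1 hi
    have hprod := Ideal.mul_mem_mul (ha (i + 1)) (ih (m - (i + 1)) (by omega))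
    rw [← pow_add] at hprod
    exact Ideal.pow_le_pow_right (by omega) hprod

section nuRel

variable {R : Type*} [CommRing R] {I J K : Ideal R}

lemma bddAbove_setOf_not_pow_le_s19 (h : ∃ s, I ^ s ≤ J) : BddAbove {t | ¬ I ^ t ≤ J} := by
  obtain ⟨s, hs⟩ := h
  refine ⟨s, fun t ht => ?_⟩
  by_contra! hst
  exact ht ((Ideal.pow_le_pow_right hst.le).trans hs)

lemma le_nuRel {t : ℕ} (h : ∃ s, I ^ s ≤ J) (ht : ¬ I ^ t ≤ J) : t ≤ nuRel I J :=
  le_csSup (bddAbove_setOf_not_pow_le_s19 h) ht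

lemma not_pow_nuRel_le (h : ∃ s, I ^ s ≤ J) (hJ : J ≠ ⊤) : ¬ I ^ nuRel I J ≤ J :=
  Nat.sSup_mem ⟨0, by simpa [Ideal.one_eq_top] using hJ⟩ (bddAbove_setOf_not_pow_le_s19 h)

lemma nuRel_map_quotient_mk :
    nuRel (I.map (Ideal.Quotient.mk K)) (J.map (Ideal.Quotient.mk K)) = nuRel I (J ⊔ K) := by
  simp only [nuRel, ← Ideal.map_pow, Ideal.map_le_iff_le_comap,
    Ideal.comap_map_of_surjective' _ Ideal.Quotient.mk_surjective, Ideal.mk_ker]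

lemma nuRel_sup_add_le {g : R} {a : ℕ} (h : ∃ s, I ^ s ≤ J) (hJK : J ⊔ K ≠ ⊤)
    (hg : g ∈ I ^ a) (hcolon : ∀ f, f * g ∈ J → f ∈ J ⊔ K) :
    nuRel I (J ⊔ K) + a ≤ nuRel I J := by
  have hbdd : ∃ s, I ^ s ≤ J ⊔ K := h.imp fun _ hs => hs.trans le_sup_left
  obtain ⟨f, hf, hfJK⟩ := SetLike.not_le_iff_exists.1 (not_pow_nuRel_le hbdd hJK)
  refine le_nuRel h fun hle => hfJK (hcolon f (hle ?_))
  rw [pow_add]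
  exact Ideal.mul_mem_mul hf hg

end nuRel

namespace MvPolynomial

variable {σ R : Type*} [CommSemiring R]

theorem IsHomogeneous.mem_pow_idealOfVars {φ : MvPolynomial σ R} {d : ℕ} (h : φ.IsHomogeneous d) :
    φ ∈ idealOfVars σ R ^ d := by
  rw [mem_pow_idealOfVars_iff]
  intro m hm
  rw [Finsupp.degree_eq_weight_one]
  exact (h (mem_support_iff.1 hm)).ge

theorem idealOfVars_ne_top [Nontrivial R] : idealOfVars σ R ≠ ⊤ := fun h => by
  simpa using (C_mem_pow_idealOfVars_iff (σ := σ) 1 (1 : R)).1 (by simp [h])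

theorem IsHomogeneous.eq_sum_C_mul_X [Fintype σ] [DecidableEq σ] {φ : MvPolynomial σ R}
    (h : φ.IsHomogeneous 1) :
    φ = ∑ i, C (coeff (Finsupp.single i 1) φ) * X i := by
  ext m
  simp only [coeff_sum, coeff_C_mul, coeff_X, mul_ite, mul_one, mul_zero]
  by_cases hm : ∃ i, Finsupp.single i 1 = m
  · obtain ⟨i, rfl⟩ := hm
    rw [Finset.sum_eq_single i (fun b _ hb => if_neg fun hbi =>
      hb (Finsupp.single_left_injective one_ne_zero hbi)) (by simp), if_pos rfl]
  · rw [Finset.sum_eq_zero fun i _ => if_neg fun hi => hm ⟨i, hi⟩]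
    by_contra hc
    have hdeg : m.sum (fun _ n => n) = 1 := by
      rw [← h hc, Finsupp.weight_apply]
      simp
    obtain ⟨i, rfl⟩ := (Finsupp.sum_eq_one_iff m).1 hdeg
    exact hm ⟨i, rfl⟩

end MvPolynomial

section frobM

variable {k : Type*} [Field k] {n q : ℕ}

lemma X_pow_mem_frobM (i : Fin n) : (X i : MvPolynomial (Fin n) k) ^ q ∈ frobM k n q :=
  Ideal.subset_span ⟨i, rfl⟩

lemma frobM_le_idealOfVars (hq : q ≠ 0) : frobM k n q ≤ idealOfVars (Fin n) k :=
  Ideal.span_le.2 <| Set.range_subset_iff.2 fun i =>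
    Ideal.pow_mem_of_mem _ (Ideal.subset_span (Set.mem_range_self i)) q (Nat.pos_of_ne_zero hq)

lemma exists_pow_idealOfVars_le_frobM : ∃ t, idealOfVars (Fin n) k ^ t ≤ frobM k n q :=
  Ideal.exists_pow_le_of_le_radical_of_fg
    (Ideal.span_le.2 <| Set.range_subset_iff.2 fun i =>
      show X i ∈ (frobM k n q).radical from ⟨q, X_pow_mem_frobM i⟩)
    (idealOfVars_fg (Fin n) k)

lemma frobM_eq_span_monomial :
    frobM k n q = Ideal.span ((monomial · (1 : k)) '' Set.range (Finsupp.single · q)) := by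
  rw [frobM, ← Set.range_comp]
  simp only [Function.comp_def, X_pow_eq_monomial]

lemma mem_frobM_sup_span_X_of_mul_X_pow_mem (hq : q ≠ 0) {j : Fin n} {g : MvPolynomial (Fin n) k}
    (h : g * X j ^ (q - 1) ∈ frobM k n q) : g ∈ frobM k n q ⊔ Ideal.span {X j} := by
  rw [frobM_eq_span_monomial, mem_ideal_span_monomial_image] at h
  have hX : Ideal.span {(X j : MvPolynomial (Fin n) k)} =
      Ideal.span ((monomial · (1 : k)) '' {Finsupp.single j 1}) := by
    rw [Set.image_singleton]; rfl
  rw [frobM_eq_span_monomial, hX, ← Ideal.span_union, ← Set.image_union,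
    mem_ideal_span_monomial_image]
  intro m hm
  obtain ⟨_, ⟨i, rfl⟩, hi⟩ := h (m + Finsupp.single j (q - 1)) (by
    rwa [X_pow_eq_monomial, mem_support_iff, coeff_mul_monomial, mul_one, ← mem_support_iff])
  rw [Finsupp.single_le_iff, Finsupp.add_apply] at hi
  by_cases hij : i = j
  · subst hij
    refine ⟨_, Or.inr rfl, Finsupp.single_le_iff.2 ?_⟩
    rw [Finsupp.single_eq_same] at hi
    omega
  · refine ⟨_, Or.inl ⟨i, rfl⟩, Finsupp.single_le_iff.2 ?_⟩
    rwa [Finsupp.single_eq_of_ne hij, add_zero] at hi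

variable (p : ℕ) [ExpChar k p] (e : ℕ)

lemma frobM_eq_map_iterateFrobenius :
    frobM k n (p ^ e) = (idealOfVars (Fin n) k).map (iterateFrobenius _ p e) := by
  rw [Ideal.map_span, ← Set.range_comp]
  rfl

lemma pow_mem_frobM {g : MvPolynomial (Fin n) k} (hg : g ∈ idealOfVars (Fin n) k) :
    g ^ p ^ e ∈ frobM k n (p ^ e) := by
  rw [frobM_eq_map_iterateFrobenius]
  exact Ideal.mem_map_of_mem _ hg

lemma map_frobM_le {F : Type*} [FunLike F (MvPolynomial (Fin n) k) (MvPolynomial (Fin n) k)]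
    [RingHomClass F (MvPolynomial (Fin n) k) (MvPolynomial (Fin n) k)] (φ : F)
    (hφ : ∀ i, φ (X i) ∈ idealOfVars (Fin n) k) :
    (frobM k n (p ^ e)).map φ ≤ frobM k n (p ^ e) := by
  rw [frobM, Ideal.map_span, Ideal.span_le]
  rintro _ ⟨_, ⟨i, rfl⟩, rfl⟩
  rw [map_pow]
  exact pow_mem_frobM p e (hφ i)

end frobM

section LinearForm

variable {k : Type*} [Field k] {n : ℕ}

lemma exists_leftInverse_map_eq_X {ℓ : MvPolynomial (Fin n) k} (hl : ℓ.IsHomogeneous 1)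
    (hl0 : ℓ ≠ 0) :
    ∃ (j : Fin n) (σ τ : MvPolynomial (Fin n) k →ₐ[k] MvPolynomial (Fin n) k),
      Function.LeftInverse τ σ ∧ σ ℓ = X j ∧
        (∀ i, σ (X i) ∈ idealOfVars (Fin n) k) ∧ ∀ i, τ (X i) ∈ idealOfVars (Fin n) k := by
  classical
  set c : Fin n → k := fun i => coeff (Finsupp.single i 1) ℓ
  have hℓ : ℓ = ∑ i, C (c i) * X i := hl.eq_sum_C_mul_X
  obtain ⟨j, hj⟩ : ∃ j, c j ≠ 0 := by
    by_contra! h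
    exact hl0 (by simp [hℓ, h])
  set u := ∑ i ∈ Finset.univ.erase j, C (c i) * X i
  have hℓu : ℓ = C (c j) * X j + u := by
    rw [hℓ, ← Finset.add_sum_erase _ _ (Finset.mem_univ j)]
  have hfix : ∀ φ : MvPolynomial (Fin n) k →ₐ[k] MvPolynomial (Fin n) k,
      (∀ i ≠ j, φ (X i) = X i) → φ u = u := fun φ hφ => by
    simp only [u, map_sum, map_mul, algHom_C, algebraMap_eq]
    exact Finset.sum_congr rfl fun i hi => by rw [hφ i (Finset.ne_of_mem_erase hi)]
  set σ := aeval (R := k) (Function.update X j (C (c j)⁻¹ * (X j - u)))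
  set τ := aeval (R := k) (Function.update X j ℓ)
  have hσu : σ u = u := hfix σ fun i hi => by simp [σ, hi]
  have hτu : τ u = u := hfix τ fun i hi => by simp [τ, hi]
  have hσj : σ (X j) = C (c j)⁻¹ * (X j - u) := by simp [σ]
  have hτj : τ (X j) = ℓ := by simp [τ]
  have hτσ : τ.comp σ = AlgHom.id k _ := by
    refine algHom_ext fun i => ?_
    by_cases hi : i = j
    · subst hi
      rw [AlgHom.comp_apply, hσj, map_mul, map_sub, algHom_C, algebraMap_eq, hτu, hτj, hℓu,
        add_sub_cancel_right, ← mul_assoc, ← C_mul, inv_mul_cancel₀ hj, C_1, one_mul,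
        AlgHom.id_apply]
    · simp [σ, τ, hi]
  have hσℓ : σ ℓ = X j := by
    rw [hℓu, map_add, map_mul, algHom_C, algebraMap_eq, hσu, hσj, ← mul_assoc, ← C_mul,
      mul_inv_cancel₀ hj, C_1, one_mul, sub_add_cancel]
  have hX : ∀ i, (X i : MvPolynomial (Fin n) k) ∈ idealOfVars (Fin n) k :=
    fun i => Ideal.subset_span (Set.mem_range_self i)
  have hu : u ∈ idealOfVars (Fin n) k :=
    Ideal.sum_mem _ fun i _ => Ideal.mul_mem_left _ _ (hX i)
  refine ⟨j, σ, τ, fun g => by rw [← AlgHom.comp_apply, hτσ, AlgHom.id_apply], hσℓ,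
    fun i => ?_, fun i => ?_⟩
  · by_cases hi : i = j
    · rw [hi, hσj]
      exact Ideal.mul_mem_left _ _ (Ideal.sub_mem _ (hX j) hu)
    · simpa [σ, hi] using hX i
  · by_cases hi : i = j
    · rw [hi, hτj]
      simpa using hl.mem_pow_idealOfVars
    · simpa [τ, hi] using hX i

lemma mem_frobM_sup_span_of_mul_pow_mem {p : ℕ} [ExpChar k p] {e : ℕ}
    {ℓ f : MvPolynomial (Fin n) k} (hl : ℓ.IsHomogeneous 1) (hl0 : ℓ ≠ 0)
    (h : f * ℓ ^ (p ^ e - 1) ∈ frobM k n (p ^ e)) : f ∈ frobM k n (p ^ e) ⊔ Ideal.span {ℓ} := by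
  obtain ⟨j, σ, τ, hτσ, hσℓ, hσ, hτ⟩ := exists_leftInverse_map_eq_X hl hl0
  have hσf : σ f ∈ frobM k n (p ^ e) ⊔ Ideal.span {X j} := by
    refine mem_frobM_sup_span_X_of_mul_X_pow_mem (expChar_pow_pos k p e).ne' ?_
    rw [← hσℓ, ← map_pow, ← map_mul]
    exact map_frobM_le p e σ hσ (Ideal.mem_map_of_mem σ h)
  have hτ_le : (frobM k n (p ^ e) ⊔ Ideal.span {X j}).map τ ≤
      frobM k n (p ^ e) ⊔ Ideal.span {ℓ} := by
    rw [Ideal.map_sup, Ideal.map_span, Set.image_singleton, ← hσℓ, hτσ ℓ]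
    exact sup_le_sup_right (map_frobM_le p e τ hτ) _
  rw [← hτσ f]
  exact hτ_le (Ideal.mem_map_of_mem τ hσf)

end LinearForm

lemma one_div_le_sub_of_tendsto {p d N : ℕ} (hp : 1 < p) (hd : 0 < d) {x y : ℕ → ℕ} {a b : ℝ}
    (hx : Tendsto (fun e => (x e : ℝ) / (p : ℝ) ^ e) atTop (nhds a))
    (hy : Tendsto (fun e => (y e : ℝ) / (p : ℝ) ^ e) atTop (nhds b))
    (h : ∀ e, y e + ((p ^ e - 1) / d + 1 - N) ≤ x e) : 1 / (d : ℝ) ≤ a - b := by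
  have hlow : Tendsto (fun e => 1 / (d : ℝ) - N * (p : ℝ)⁻¹ ^ e) atTop (nhds (1 / (d : ℝ))) := by
    have hp' : (p : ℝ)⁻¹ < 1 := inv_lt_one_of_one_lt₀ (by exact_mod_cast hp)
    simpa using ((tendsto_pow_atTop_nhds_zero_of_lt_one (by positivity) hp').const_mul
      (N : ℝ)).const_sub (1 / (d : ℝ))
  refine le_of_tendsto_of_tendsto' hlow (by simpa only [sub_div] using hx.sub hy) fun e => ?_
  have hceil : p ^ e ≤ d * ((p ^ e - 1) / d + 1) := by
    have := Nat.lt_mul_div_succ (p ^ e - 1) hd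
    omega
  have hsum : (p ^ e - 1) / d + 1 + y e ≤ x e + N := by have := h e; omega
  have h1 : ((p : ℝ) ^ e) ≤ d * (((p ^ e - 1) / d + 1 : ℕ) : ℝ) := by exact_mod_cast hceil
  have h2 : (((p ^ e - 1) / d + 1 : ℕ) : ℝ) ≤ x e - y e + N := by
    have : (((p ^ e - 1) / d + 1 + y e : ℕ) : ℝ) ≤ ((x e + N : ℕ) : ℝ) := by exact_mod_cast hsum
    push_cast at this ⊢
    linarith
  have hq : (0 : ℝ) < (p : ℝ) ^ e := by positivity
  rw [inv_pow, ← div_eq_mul_inv, sub_le_iff_le_add, ← sub_div, ← add_div,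
    div_le_div_iff₀ (by positivity) hq, one_mul]
  exact h1.trans (mul_le_mul_of_nonneg_left h2 (Nat.cast_nonneg d)) |>.trans_eq (mul_comm _ _)

/-- in char `p > 0`, if `m^d` is contained in the integral closure
of `I` and `H = V(ℓ)` is a hyperplane through the origin, then the F-pure
thresholds satisfy `c(I) - c(I|_H) ≥ 1/d`. -/
theorem stmt19 (k : Type*) [Field k] (p : ℕ) (hp : p.Prime) [CharP k p]
    (n d : ℕ) (hd : 0 < d)
    (I : Ideal (MvPolynomial (Fin n) k))
    (hIm : I ≤ Ideal.span (Set.range (X : Fin n → MvPolynomial (Fin n) k)))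
    (hic : ((Ideal.span (Set.range (X : Fin n → MvPolynomial (Fin n) k)) ^ d :
        Ideal (MvPolynomial (Fin n) k)) : Set _) ⊆ icl I)
    (ℓ : MvPolynomial (Fin n) k) (hl : ℓ.IsHomogeneous 1) (hl0 : ℓ ≠ 0)
    (cI cH : ℝ)
    (hcI : Tendsto (fun e : ℕ => (nuRel I (frobM k n (p ^ e)) : ℝ) / ((p : ℝ) ^ e))
      atTop (nhds cI))
    (hcH : Tendsto (fun e : ℕ =>
        (nuRel (I.map (Ideal.Quotient.mk (Ideal.span {ℓ})))
          ((frobM k n (p ^ e)).map (Ideal.Quotient.mk (Ideal.span {ℓ}))) : ℝ) / ((p : ℝ) ^ e))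
      atTop (nhds cH)) :
    1 / (d : ℝ) ≤ cI - cH := by
  have : Fact p.Prime := ⟨hp⟩
  have hℓ : ℓ ∈ idealOfVars (Fin n) k := by simpa using hl.mem_pow_idealOfVars
  obtain ⟨N, hN⟩ := pow_mem_pow_sub_of_mem_icl (hic (Ideal.pow_mem_pow hℓ d))
  refine one_div_le_sub_of_tendsto (N := N) hp.one_lt hd hcI
    (by simpa only [nuRel_map_quotient_mk] using hcH) fun e => ?_
  have hq : p ^ e ≠ 0 := pow_ne_zero e hp.ne_zero
  obtain ⟨t, ht⟩ := exists_pow_idealOfVars_le_frobM (k := k) (n := n) (q := p ^ e)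
  have hproper : frobM k n (p ^ e) ⊔ Ideal.span {ℓ} ≠ ⊤ :=
    ne_top_of_le_ne_top idealOfVars_ne_top
      (sup_le (frobM_le_idealOfVars hq) ((Ideal.span_singleton_le_iff_mem _).2 hℓ))
  have hℓpow : ℓ ^ (p ^ e - 1) ∈ I ^ ((p ^ e - 1) / d + 1 - N) := by
    have hsplit : ℓ ^ (p ^ e - 1) = (ℓ ^ d) ^ ((p ^ e - 1) / d) * ℓ ^ ((p ^ e - 1) % d) := by
      rw [← pow_mul, ← pow_add, Nat.div_add_mod]
    rw [hsplit]
    exact Ideal.mul_mem_right _ _ (hN _)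
  exact nuRel_sup_add_le ⟨t, (Ideal.pow_right_mono hIm t).trans ht⟩ hproper hℓpow
    fun f hf => mem_frobM_sup_span_of_mul_pow_mem hl hl0 hf
end
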